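/- arXiv:math/0311478 — 11 statements merged into one kernel-verified Lean document; each statement's English description precedes it below -/
import Mathlib

section
/- For every integer J ≥ 3, each sign ε ∈ {+1,−1}, and all real numbers x_1,x_3,x_4,…,x_J one has det A_J^ε(x_1,0,x_3,x_4,…,x_J) = −det A_{J−2}^{−ε}(x_1+x_3,x_4,…,x_J). (Lemma 7.5) -/
/-- The `J × J` real symmetric matrix `A_J^ε(x₁, …, x_J)` (vertices `0`-indexed):
`A_J^ε = -2 ∑ᵢ xᵢ E_{i,i} + ∑_{i=1}^{J-1} (E_{i,i+1} + E_{i+1,i}) + ε (E_{1,J} + E_{J,1})`. -/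
def matA (J : ℕ) (ε : ℝ) (x : ℕ → ℝ) : Matrix (Fin J) (Fin J) ℝ :=
  Matrix.of fun i j =>
    (if (i : ℕ) = (j : ℕ) then -2 * x (i : ℕ) else 0)
    + (if (i : ℕ) + 1 = (j : ℕ) ∨ (j : ℕ) + 1 = (i : ℕ) then 1 else 0)
    + (if (i : ℕ) = 0 ∧ (j : ℕ) = J - 1 then ε else 0)
    + (if (j : ℕ) = 0 ∧ (i : ℕ) = J - 1 then ε else 0)

namespace DetAAux

/-- entry formula for `matA (m+3)` with indices as naturals -/
def d (m : ℕ) (ε : ℝ) (x : ℕ → ℝ) (i j : ℕ) : ℝ :=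
  (if i = j then -2 * x i else 0)
  + (if i + 1 = j ∨ j + 1 = i then 1 else 0)
  + (if i = 0 ∧ j = m + 2 then ε else 0)
  + (if j = 0 ∧ i = m + 2 then ε else 0)

def M0 (m : ℕ) (ε : ℝ) (x : ℕ → ℝ) : Matrix (Fin (m+3)) (Fin (m+3)) ℝ :=
  Matrix.of fun i j => d m ε x i j

def M1 (m : ℕ) (ε : ℝ) (x : ℕ → ℝ) : Matrix (Fin (m+3)) (Fin (m+3)) ℝ :=
  Matrix.of fun i j =>
    d m ε x i j - (if (j:ℕ) = 2 then d m ε x i 0 else 0)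

def M2 (m : ℕ) (ε : ℝ) (x : ℕ → ℝ) : Matrix (Fin (m+3)) (Fin (m+3)) ℝ :=
  Matrix.of fun i j =>
    d m ε x i j - (if (j:ℕ) = 2 then d m ε x i 0 else 0)
    - (if (i:ℕ) = 2 then d m ε x 0 j - (if (j:ℕ) = 2 then d m ε x 0 0 else 0) else 0)

def M3 (m : ℕ) (ε : ℝ) (x : ℕ → ℝ) : Matrix (Fin (m+3)) (Fin (m+3)) ℝ :=
  Matrix.of fun i j =>
    d m ε x i j - (if (j:ℕ) = 2 then d m ε x i 0 else 0)
    - (if (i:ℕ) = 2 then d m ε x 0 j - (if (j:ℕ) = 2 then d m ε x 0 0 else 0) else 0)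
    + (if (i:ℕ) = 0 ∧ (j:ℕ) = 0 then 2 * x 0 else 0)

def M4 (m : ℕ) (ε : ℝ) (x : ℕ → ℝ) : Matrix (Fin (m+3)) (Fin (m+3)) ℝ :=
  Matrix.of fun i j =>
    d m ε x i j - (if (j:ℕ) = 2 then d m ε x i 0 else 0)
    - (if (i:ℕ) = 2 then d m ε x 0 j - (if (j:ℕ) = 2 then d m ε x 0 0 else 0) else 0)
    + (if (i:ℕ) = 0 ∧ (j:ℕ) = 0 then 2 * x 0 else 0)
    - (if (i:ℕ) = 2 ∧ (j:ℕ) = 0 then 2 * x 0 else 0)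

def M5 (m : ℕ) (ε : ℝ) (x : ℕ → ℝ) : Matrix (Fin (m+3)) (Fin (m+3)) ℝ :=
  Matrix.of fun i j =>
    d m ε x i j - (if (j:ℕ) = 2 then d m ε x i 0 else 0)
    - (if (i:ℕ) = 2 then d m ε x 0 j - (if (j:ℕ) = 2 then d m ε x 0 0 else 0) else 0)
    + (if (i:ℕ) = 0 ∧ (j:ℕ) = 0 then 2 * x 0 else 0)
    - (if (i:ℕ) = 2 ∧ (j:ℕ) = 0 then 2 * x 0 else 0)
    - (if (i:ℕ) = m + 2 ∧ (j:ℕ) = 0 then ε else 0)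

def M6 (m : ℕ) (ε : ℝ) (x : ℕ → ℝ) : Matrix (Fin (m+3)) (Fin (m+3)) ℝ :=
  Matrix.of fun i j =>
    d m ε x i j - (if (j:ℕ) = 2 then d m ε x i 0 else 0)
    - (if (i:ℕ) = 2 then d m ε x 0 j - (if (j:ℕ) = 2 then d m ε x 0 0 else 0) else 0)
    + (if (i:ℕ) = 0 ∧ (j:ℕ) = 0 then 2 * x 0 else 0)
    - (if (i:ℕ) = 2 ∧ (j:ℕ) = 0 then 2 * x 0 else 0)
    - (if (i:ℕ) = m + 2 ∧ (j:ℕ) = 0 then ε else 0)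
    - (if (i:ℕ) = 0 ∧ (j:ℕ) = 2 then 2 * x 0 else 0)

def M7 (m : ℕ) (ε : ℝ) (x : ℕ → ℝ) : Matrix (Fin (m+3)) (Fin (m+3)) ℝ :=
  Matrix.of fun i j =>
    d m ε x i j - (if (j:ℕ) = 2 then d m ε x i 0 else 0)
    - (if (i:ℕ) = 2 then d m ε x 0 j - (if (j:ℕ) = 2 then d m ε x 0 0 else 0) else 0)
    + (if (i:ℕ) = 0 ∧ (j:ℕ) = 0 then 2 * x 0 else 0)
    - (if (i:ℕ) = 2 ∧ (j:ℕ) = 0 then 2 * x 0 else 0)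
    - (if (i:ℕ) = m + 2 ∧ (j:ℕ) = 0 then ε else 0)
    - (if (i:ℕ) = 0 ∧ (j:ℕ) = 2 then 2 * x 0 else 0)
    - (if (i:ℕ) = 0 ∧ (j:ℕ) = m + 2 then ε else 0)

variable (m : ℕ) (ε : ℝ) (x : ℕ → ℝ)

lemma d_row1 (hx : x 1 = 0) (j : ℕ) :
    d m ε x 1 j = (if j = 0 then 1 else 0) + (if j = 2 then 1 else 0) := by
  unfold d
  split_ifs <;> first | (simp_all; try ring) | omega | ring

lemma d_col1 (hx : x 1 = 0) (i : ℕ) :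
    d m ε x i 1 = (if i = 0 then 1 else 0) + (if i = 2 then 1 else 0) := by
  unfold d
  split_ifs <;> first | (simp_all; try ring) | omega | ring


lemma det01 : (M0 m ε x).det = (M1 m ε x).det := by
  have h : Matrix.updateCol (M0 m ε x) (⟨2, by omega⟩ : Fin (m+3))
      (fun k => M0 m ε x k ⟨2, by omega⟩ + (-1 : ℝ) • M0 m ε x k ⟨0, by omega⟩)
      = M1 m ε x := by
    ext i j
    rcases eq_or_ne j (⟨2, by omega⟩ : Fin (m+3)) with rfl | h
    · rw [Matrix.updateCol_self]
      simp only [M0, M1, Matrix.of_apply, smul_eq_mul]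
      norm_num
      try ring
    · rw [Matrix.updateCol_ne h]
      have h' : ¬((j:ℕ) = 2) := fun hh => h (Fin.ext hh)
      simp only [M0, M1, Matrix.of_apply, if_neg h']
      ring
  rw [← h, Matrix.det_updateCol_add_smul_self _ (by simp [Fin.ext_iff]) _]

lemma det12 : (M1 m ε x).det = (M2 m ε x).det := by
  have h : Matrix.updateRow (M1 m ε x) (⟨2, by omega⟩ : Fin (m+3))
      (M1 m ε x ⟨2, by omega⟩ + (-1 : ℝ) • M1 m ε x ⟨0, by omega⟩)
      = M2 m ε x := by
    ext i j
    rcases eq_or_ne i (⟨2, by omega⟩ : Fin (m+3)) with rfl | h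
    · rw [Matrix.updateRow_self]
      simp only [M1, M2, Matrix.of_apply, Pi.add_apply, Pi.smul_apply, smul_eq_mul]
      norm_num
      try ring
    · rw [Matrix.updateRow_ne h]
      have h' : ¬((i:ℕ) = 2) := fun hh => h (Fin.ext hh)
      simp only [M1, M2, Matrix.of_apply, if_neg h']
      ring
  rw [← h, Matrix.det_updateRow_add_smul_self _ (by simp [Fin.ext_iff]) _]

lemma det23 (hx : x 1 = 0) : (M2 m ε x).det = (M3 m ε x).det := by
  have h : Matrix.updateRow (M2 m ε x) (⟨0, by omega⟩ : Fin (m+3))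
      (M2 m ε x ⟨0, by omega⟩ + (2 * x 0) • M2 m ε x ⟨1, by omega⟩)
      = M3 m ε x := by
    ext i j
    rcases eq_or_ne i (⟨0, by omega⟩ : Fin (m+3)) with rfl | h
    · rw [Matrix.updateRow_self]
      simp only [M2, M3, Matrix.of_apply, Pi.add_apply, Pi.smul_apply, smul_eq_mul,
        d_row1 m ε x hx]
      norm_num
      try split_ifs <;> first | ring | omega
      try ring
    · rw [Matrix.updateRow_ne h]
      have h' : ¬((i:ℕ) = 0) := fun hh => h (Fin.ext hh)
      have q : ¬((i:ℕ) = 0 ∧ (j:ℕ) = 0) := fun hh => h' hh.1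
      simp only [M2, M3, Matrix.of_apply, if_neg q]
      ring
  rw [← h, Matrix.det_updateRow_add_smul_self _ (by simp [Fin.ext_iff]) _]

lemma det34 (hx : x 1 = 0) : (M3 m ε x).det = (M4 m ε x).det := by
  have h : Matrix.updateRow (M3 m ε x) (⟨2, by omega⟩ : Fin (m+3))
      (M3 m ε x ⟨2, by omega⟩ + (-(2 * x 0)) • M3 m ε x ⟨1, by omega⟩)
      = M4 m ε x := by
    ext i j
    rcases eq_or_ne i (⟨2, by omega⟩ : Fin (m+3)) with rfl | h
    · rw [Matrix.updateRow_self]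
      simp only [M3, M4, Matrix.of_apply, Pi.add_apply, Pi.smul_apply, smul_eq_mul,
        d_row1 m ε x hx]
      norm_num
      try split_ifs <;> first | ring | omega
      try ring
    · rw [Matrix.updateRow_ne h]
      have h' : ¬((i:ℕ) = 2) := fun hh => h (Fin.ext hh)
      have q : ¬((i:ℕ) = 2 ∧ (j:ℕ) = 0) := fun hh => h' hh.1
      simp only [M3, M4, Matrix.of_apply, if_neg q, if_neg h']
      ring
  rw [← h, Matrix.det_updateRow_add_smul_self _ (by simp [Fin.ext_iff]) _]

lemma det45 (hx : x 1 = 0) : (M4 m ε x).det = (M5 m ε x).det := by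
  have h : Matrix.updateRow (M4 m ε x) (⟨m + 2, by omega⟩ : Fin (m+3))
      (M4 m ε x ⟨m + 2, by omega⟩ + (-ε) • M4 m ε x ⟨1, by omega⟩)
      = M5 m ε x := by
    ext i j
    rcases eq_or_ne i (⟨m + 2, by omega⟩ : Fin (m+3)) with rfl | h
    · rw [Matrix.updateRow_self]
      simp only [M4, M5, Matrix.of_apply, Pi.add_apply, Pi.smul_apply, smul_eq_mul,
        d_row1 m ε x hx]
      norm_num
      try split_ifs <;> first | ring | omega
      try ring
    · rw [Matrix.updateRow_ne h]
      have h' : ¬((i:ℕ) = m + 2) := fun hh => h (Fin.ext hh)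
      have q : ¬((i:ℕ) = m + 2 ∧ (j:ℕ) = 0) := fun hh => h' hh.1
      simp only [M4, M5, Matrix.of_apply, if_neg q]
      ring
  rw [← h, Matrix.det_updateRow_add_smul_self _ (by simp [Fin.ext_iff]) _]

lemma det56 (hx : x 1 = 0) : (M5 m ε x).det = (M6 m ε x).det := by
  have h : Matrix.updateCol (M5 m ε x) (⟨2, by omega⟩ : Fin (m+3))
      (fun k => M5 m ε x k ⟨2, by omega⟩ + (-(2 * x 0)) • M5 m ε x k ⟨1, by omega⟩)
      = M6 m ε x := by
    ext i j
    rcases eq_or_ne j (⟨2, by omega⟩ : Fin (m+3)) with rfl | h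
    · rw [Matrix.updateCol_self]
      simp only [M5, M6, Matrix.of_apply, smul_eq_mul, d_col1 m ε x hx]
      norm_num
      try split_ifs <;> first | ring | omega
      try ring
    · rw [Matrix.updateCol_ne h]
      have h' : ¬((j:ℕ) = 2) := fun hh => h (Fin.ext hh)
      have q : ¬((i:ℕ) = 0 ∧ (j:ℕ) = 2) := fun hh => h' hh.2
      simp only [M5, M6, Matrix.of_apply, if_neg q]
      ring
  rw [← h, Matrix.det_updateCol_add_smul_self _ (by simp [Fin.ext_iff]) _]

lemma det67 (hx : x 1 = 0) : (M6 m ε x).det = (M7 m ε x).det := by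
  have h : Matrix.updateCol (M6 m ε x) (⟨m + 2, by omega⟩ : Fin (m+3))
      (fun k => M6 m ε x k ⟨m + 2, by omega⟩ + (-ε) • M6 m ε x k ⟨1, by omega⟩)
      = M7 m ε x := by
    ext i j
    rcases eq_or_ne j (⟨m + 2, by omega⟩ : Fin (m+3)) with rfl | h
    · rw [Matrix.updateCol_self]
      simp only [M6, M7, Matrix.of_apply, smul_eq_mul, d_col1 m ε x hx]
      norm_num
      try split_ifs <;> first | ring | omega
      try ring
    · rw [Matrix.updateCol_ne h]
      have h' : ¬((j:ℕ) = m + 2) := fun hh => h (Fin.ext hh)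
      have q : ¬((i:ℕ) = 0 ∧ (j:ℕ) = m + 2) := fun hh => h' hh.2
      simp only [M6, M7, Matrix.of_apply, if_neg q]
      ring
  rw [← h, Matrix.det_updateCol_add_smul_self _ (by simp [Fin.ext_iff]) _]

def f : Fin 2 ⊕ Fin (m+1) ≃ Fin (m+3) where
  toFun := Sum.elim (fun i => ⟨(i:ℕ), by omega⟩) fun k => ⟨(k:ℕ)+2, by have := k.isLt; omega⟩
  invFun i := if h : (i:ℕ) < 2 then .inl ⟨(i:ℕ), h⟩
    else .inr ⟨(i:ℕ)-2, by have := i.isLt; omega⟩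
  left_inv := by
    rintro (i | k)
    · simp [Fin.is_lt, Fin.ext_iff]
      try omega
    · have := k.isLt
      simp [Fin.ext_iff]
      try omega
  right_inv := by
    intro i
    have := i.isLt
    by_cases h : (i:ℕ) < 2 <;> simp [h, Fin.ext_iff] <;> try omega

lemma block_eq (hx : x 1 = 0) :
    (M7 m ε x).submatrix (f m) (f m)
      = Matrix.fromBlocks (!![0,1;1,0]) 0 0
          (matA (m+1) (-ε) (fun i => if i = 0 then x 0 + x 2 else x (i + 2))) := by
  ext i j
  rcases i with i | k <;> rcases j with j | l
  · -- top-left 2×2 block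
    fin_cases i <;> fin_cases j <;>
      simp only [Matrix.submatrix_apply, f, Equiv.coe_fn_mk, Sum.elim_inl,
        Matrix.fromBlocks_apply₁₁, M7, d, Matrix.of_apply, Fin.val_mk,
        Fin.isValue, Matrix.cons_val', Matrix.cons_val_zero, Matrix.cons_val_one,
        Matrix.head_cons, Matrix.head_fin_const, Matrix.empty_val',
        Matrix.cons_val_fin_one] <;>
      norm_num <;> first
        | (split_ifs <;> first | ring | omega | assumption | (intro; exfalso; omega) | (simp [hx]))
        | assumption
        | (intro; exfalso; omega)
        | ring

  · -- top-right block: zero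
    rcases l with ⟨b, hb⟩
    fin_cases i <;>
      simp only [Matrix.submatrix_apply, f, Equiv.coe_fn_mk, Sum.elim_inl, Sum.elim_inr,
        Matrix.fromBlocks_apply₁₂, M7, d, Matrix.of_apply, Fin.val_mk, Fin.isValue,
        Matrix.zero_apply] <;>
      norm_num <;> first
        | (split_ifs <;> first | ring | omega | assumption | (intro; exfalso; omega) | (simp [hx]))
        | assumption
        | (intro; exfalso; omega)
        | ring

  · -- bottom-left block: zero
    rcases k with ⟨a, ha⟩
    fin_cases j <;>
      simp only [Matrix.submatrix_apply, f, Equiv.coe_fn_mk, Sum.elim_inl, Sum.elim_inr,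
        Matrix.fromBlocks_apply₂₁, M7, d, Matrix.of_apply, Fin.val_mk, Fin.isValue,
        Matrix.zero_apply] <;>
      norm_num <;> first
        | (split_ifs <;> first | ring | omega | assumption | (intro; exfalso; omega) | (simp [hx]))
        | assumption
        | (intro; exfalso; omega)
        | ring

  · -- bottom-right block
    rcases k with ⟨a, ha⟩
    rcases l with ⟨b, hb⟩
    have c1 : (a + 2 = b + 2) ↔ (a = b) := by omega
    have c2 : (a + 2 + 1 = b + 2 ∨ b + 2 + 1 = a + 2) ↔ (a + 1 = b ∨ b + 1 = a) := by omega
    have c3 : (a + 2 = 0 ∧ b + 2 = m + 2) ↔ False := by first | omega | (simp; try omega) | simp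
    have c4 : (b + 2 = 0 ∧ a + 2 = m + 2) ↔ False := by first | omega | (simp; try omega) | simp
    have c5 : (b + 2 = 2) ↔ (b = 0) := by omega
    have c6 : (a + 2 = 2) ↔ (a = 0) := by omega
    have c7 : (a + 2 = 0) ↔ False := by first | omega | (simp; try omega) | simp
    have c8 : (a + 2 + 1 = 0 ∨ 0 + 1 = a + 2) ↔ False := by first | omega | (simp; try omega) | simp
    have c9 : (a + 2 = 0 ∧ (0:ℕ) = m + 2) ↔ False := by first | omega | (simp; try omega) | simp
    have c10 : ((0:ℕ) = 0 ∧ a + 2 = m + 2) ↔ (a = m) := by first | omega | (simp; try omega)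
    have c11 : ((0:ℕ) = b + 2) ↔ False := by first | omega | (simp; try omega) | simp
    have c12 : (0 + 1 = b + 2 ∨ b + 2 + 1 = 0) ↔ False := by first | omega | (simp; try omega) | simp
    have c13 : ((0:ℕ) = 0 ∧ b + 2 = m + 2) ↔ (b = m) := by first | omega | (simp; try omega)
    have c14 : (b + 2 = 0 ∧ (0:ℕ) = m + 2) ↔ False := by first | omega | (simp; try omega) | simp
    have c15 : ((0:ℕ) = 0 ∧ (0:ℕ) = m + 2) ↔ False := by first | omega | (simp; try omega) | simp
    have c16 : (a + 2 = m + 2) ↔ (a = m) := by first | omega | (simp; try omega)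
    have c17 : (b + 2 = m + 2) ↔ (b = m) := by first | omega | (simp; try omega)
    have c18 : (a + 2 = 2 ∧ b + 2 = 0) ↔ False := by first | omega | (simp; try omega) | simp
    have c19 : (a + 2 = 0 ∧ b + 2 = 0) ↔ False := by first | omega | (simp; try omega) | simp
    have c20 : (a + 2 = m + 2 ∧ b + 2 = 0) ↔ False := by first | omega | (simp; try omega) | simp
    have c21 : (a + 2 = 0 ∧ b + 2 = 2) ↔ False := by first | omega | (simp; try omega) | simp
    have c22 : (m + 1 - 1) = m := rfl
    simp only [Matrix.submatrix_apply, f, Equiv.coe_fn_mk, Sum.elim_inr,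
      Matrix.fromBlocks_apply₂₂, M7, d, matA, Matrix.of_apply, Fin.val_mk,
      c1, c2, c3, c4, c5, c6, c7, c8, c9, c10, c11, c12, c13, c14, c15, c16, c17,
      c18, c19, c20, c21, c22, if_false, ite_and]
    norm_num
    split_ifs <;> first | omega | (subst_vars; first | ring | omega) | ring | assumption | (intro; exfalso; omega) | (simp [hx]; try ring)
lemma det7 (hx : x 1 = 0) :
    (M7 m ε x).det
      = -(matA (m+1) (-ε) (fun i => if i = 0 then x 0 + x 2 else x (i + 2))).det := by
  rw [← Matrix.det_submatrix_equiv_self (f m) (M7 m ε x), block_eq m ε x hx,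
    Matrix.det_fromBlocks_zero₂₁]
  norm_num [Matrix.det_fin_two_of]

end DetAAux

/-- Lemma 7.5: `det A_J^ε(x₁,0,x₃,…,x_J) = -det A_{J-2}^{-ε}(x₁+x₃,x₄,…,x_J)`. -/
theorem detA_second_var_zero (J : ℕ) (hJ : 3 ≤ J) (ε : ℝ) (hε : ε = 1 ∨ ε = -1)
    (x : ℕ → ℝ) (hx : x 1 = 0) :
    (matA J ε x).det
      = -(matA (J - 2) (-ε) (fun i => if i = 0 then x 0 + x 2 else x (i + 2))).det := by
  obtain ⟨m, rfl⟩ : ∃ m, J = m + 3 := ⟨J - 3, by omega⟩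
  have h0 : matA (m+3) ε x = DetAAux.M0 m ε x := rfl
  show (matA (m+3) ε x).det
      = -(matA (m+1) (-ε) (fun i => if i = 0 then x 0 + x 2 else x (i + 2))).det
  rw [h0, DetAAux.det01, DetAAux.det12, DetAAux.det23 m ε x hx, DetAAux.det34 m ε x hx,
    DetAAux.det45 m ε x hx, DetAAux.det56 m ε x hx, DetAAux.det67 m ε x hx,
    DetAAux.det7 m ε x hx]
end

section
/- For every integer J ≥ 1 one has det A_J^−(1,…,1) = (−1)^J·4. (Lemma 7.7(b)) -/
open Matrix

section TwistedShift

variable {R : Type*} [CommRing R] (n : ℕ) (c : R)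

def twistedShift : Matrix (Fin (n + 1)) (Fin (n + 1)) R :=
  diagonal (fun i => if i = Fin.last n then c else 1) * (finRotate (n + 1)).permMatrix R

lemma twistedShift_apply (i j : Fin (n + 1)) :
    twistedShift n c i j = if i + 1 = j then (if i = Fin.last n then c else 1) else 0 := by
  simp [twistedShift, diagonal_mul, PEquiv.toMatrix_apply]

variable {c} in
lemma twistedShift_mul_transpose (hc : c * c = 1) :
    twistedShift n c * (twistedShift n c)ᵀ = 1 := by
  rw [twistedShift, transpose_mul, mul_assoc, ← mul_assoc _ _ (diagonal _)ᵀ,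
    transpose_permMatrix, ← permMatrix_mul, inv_mul_cancel, permMatrix_one, one_mul,
    diagonal_transpose, diagonal_mul_diagonal, ← diagonal_one]
  congr 1
  ext i
  split_ifs <;> simp [hc]

lemma one_sub_twistedShift_castSucc_apply (i : Fin n) (k : Fin (n + 1)) :
    (1 - twistedShift n c) i.castSucc k =
      (if (i : ℕ) = k then 1 else 0) - (if (i : ℕ) + 1 = k then 1 else 0) := by
  simp [twistedShift_apply, one_apply, Fin.coeSucc_eq_succ, Fin.ext_iff,
    (Fin.castSucc_lt_last i).ne]

lemma det_one_sub_twistedShift_submatrix_castSucc_castSucc :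
    ((1 - twistedShift n c).submatrix Fin.castSucc Fin.castSucc).det = 1 := by
  rw [det_of_isUpperTriangular]
  · refine Finset.prod_eq_one fun i _ => ?_
    simp only [submatrix_apply, one_sub_twistedShift_castSucc_apply, Fin.val_castSucc]
    simp
  · intro i j (hji : j < i)
    simp only [submatrix_apply, one_sub_twistedShift_castSucc_apply, Fin.val_castSucc]
    split_ifs <;> first | omega | simp

lemma det_one_sub_twistedShift_submatrix_castSucc_succ :
    ((1 - twistedShift n c).submatrix Fin.castSucc Fin.succ).det = (-1) ^ n := by
  rw [det_of_isLowerTriangular]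
  · simp only [submatrix_apply, one_sub_twistedShift_castSucc_apply, Fin.val_succ]
    simp
  · intro i j (hij : i < j)
    simp only [submatrix_apply, one_sub_twistedShift_castSucc_apply, Fin.val_succ]
    split_ifs <;> first | omega | simp

lemma one_sub_twistedShift_last_apply (j : Fin (n + 1)) :
    (1 - twistedShift n c) (Fin.last n) j =
      (if j = Fin.last n then 1 else 0) - (if j = 0 then c else 0) := by
  simp [twistedShift_apply, one_apply, eq_comm]

theorem det_one_sub_twistedShift : (1 - twistedShift n c).det = 1 - c := by
  rw [det_succ_row _ (Fin.last n)]
  simp only [one_sub_twistedShift_last_apply, mul_sub, sub_mul, Finset.sum_sub_distrib, mul_ite,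
    ite_mul, mul_zero, zero_mul, Finset.sum_ite_eq', Finset.mem_univ, if_true, Fin.succAbove_last,
    Fin.succAbove_zero, det_one_sub_twistedShift_submatrix_castSucc_castSucc,
    det_one_sub_twistedShift_submatrix_castSucc_succ, Fin.val_last, Fin.val_zero]
  linear_combination (1 - c) * (even_two_mul n).neg_one_pow (α := R)

end TwistedShift

theorem matA_ones_eq_neg_mul_transpose (n : ℕ) {ε : ℝ} (hε : ε * ε = 1) :
    matA (n + 1) ε (fun _ => 1) = -((1 - twistedShift n ε) * (1 - twistedShift n ε)ᵀ) := by
  have hexpand : (1 - twistedShift n ε) * (1 - twistedShift n ε)ᵀ =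
      1 - twistedShift n ε - (twistedShift n ε)ᵀ + 1 := by
    rw [transpose_sub, transpose_one, sub_mul, mul_sub, mul_sub,
      twistedShift_mul_transpose n hε, mul_one, one_mul, mul_one]
    abel
  rw [hexpand]
  ext i j
  simp only [matA, twistedShift_apply, Fin.ext_iff, Fin.val_add_one, Fin.val_last, of_apply,
    Matrix.neg_apply, Matrix.sub_apply, Matrix.add_apply, one_apply, transpose_apply]
  split_ifs <;> first | omega | ring

theorem det_matA_ones (n : ℕ) {ε : ℝ} (hε : ε * ε = 1) :
    (matA (n + 1) ε (fun _ => 1)).det = (-1) ^ (n + 1) * (1 - ε) ^ 2 := by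
  rw [matA_ones_eq_neg_mul_transpose n hε, det_neg, det_mul, det_transpose,
    det_one_sub_twistedShift, Fintype.card_fin]
  ring

/-- Lemma 7.7(b): `det A_J^-(1,…,1) = (-1)^J · 4`. -/
theorem detA_neg_ones (J : ℕ) (hJ : 1 ≤ J) :
    (matA J (-1) (fun _ => 1)).det = (-1 : ℝ) ^ J * 4 := by
  obtain ⟨n, rfl⟩ := Nat.exists_eq_add_of_le' hJ
  rw [det_matA_ones n (by norm_num)]
  norm_num
end

section
/- Let J ≥ 1 and let x_1,…,x_J be real numbers with x_i ≥ 1 for all i and (x_1,…,x_J) ≠ (1,…,1). Then the sign of det A_J^+(x_1,…,x_J) equals (−1)^J, i.e. (−1)^J·det A_J^+(x_1,…,x_J) > 0. (Lemma 7.7(c)) -/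
open Matrix Equiv Finset

section PermMatrix

variable {ι : Type*} [Fintype ι] [DecidableEq ι]

theorem dotProduct_diagonal_sub_permMatrix_mulVec (σ : Perm ι) (x v : ι → ℝ) :
    v ⬝ᵥ ((diagonal (fun i => 2 * x i) - σ.permMatrix ℝ - (σ.permMatrix ℝ)ᵀ) *ᵥ v) =
      ∑ i, (v i - v (σ i)) ^ 2 + ∑ i, 2 * (x i - 1) * v i ^ 2 := by
  have h_inv : ∑ i, v i * v (σ⁻¹ i) = ∑ i, v (σ i) * v i := by
    simpa using (Equiv.sum_comp σ fun i => v i * v (σ⁻¹ i)).symm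
  have h_sq : ∑ i, v (σ i) ^ 2 = ∑ i, v i ^ 2 := Equiv.sum_comp σ fun i => v i ^ 2
  -- the last two summands add up to zero over `ι`, by `h_sq` and `h_inv`
  have key (i : ι) : v i * (2 * x i * v i - v (σ i) - v (σ⁻¹ i)) =
      (v i - v (σ i)) ^ 2 + 2 * (x i - 1) * v i ^ 2 + (v i ^ 2 - v (σ i) ^ 2) +
        (v (σ i) * v i - v i * v (σ⁻¹ i)) := by ring
  simp only [sub_mulVec, transpose_permMatrix, permMatrix_mulVec, mulVec_diagonal, dotProduct,
    Pi.sub_apply, Function.comp_apply, key, sum_add_distrib, sum_sub_distrib, h_inv, h_sq]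
  ring

theorem posDef_diagonal_sub_permMatrix (σ : Perm ι)
    (hσ : ∀ v : ι → ℝ, v ∘ σ = v → ∀ i j, v i = v j) {x : ι → ℝ} (hx : ∀ i, 1 ≤ x i)
    (hne : ∃ k, 1 < x k) :
    (diagonal (fun i => 2 * x i) - σ.permMatrix ℝ - (σ.permMatrix ℝ)ᵀ).PosDef := by
  refine posDef_iff_dotProduct_mulVec.mpr ⟨?_, fun v hv => ?_⟩
  · simp [IsHermitian, sub_sub, add_comm]
  obtain ⟨k, hk⟩ := hne
  have h_diff (i : ι) : 0 ≤ (v i - v (σ i)) ^ 2 := sq_nonneg _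
  have h_weight (i : ι) : 0 ≤ 2 * (x i - 1) * v i ^ 2 := by
    have := hx i
    positivity
  rw [star_trivial, dotProduct_diagonal_sub_permMatrix_mulVec]
  refine (add_nonneg (sum_nonneg fun i _ => h_diff i) (sum_nonneg fun i _ => h_weight i)).lt_of_ne'
    fun h => hv ?_
  rw [add_eq_zero_iff_of_nonneg (sum_nonneg fun i _ => h_diff i)
    (sum_nonneg fun i _ => h_weight i), sum_eq_zero_iff_of_nonneg fun i _ => h_diff i,
    sum_eq_zero_iff_of_nonneg fun i _ => h_weight i] at h
  obtain ⟨h_const, h_zero⟩ := h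
  have hvk : v k = 0 := by simpa [(sub_pos.mpr hk).ne'] using h_zero k (mem_univ k)
  have h_inv : v ∘ σ = v :=
    funext fun i => (sub_eq_zero.mp (by simpa using h_const i (mem_univ i))).symm
  funext i
  rw [hσ v h_inv i k, hvk, Pi.zero_apply]

end PermMatrix

theorem apply_eq_of_comp_finRotate_eq {α : Type*} {n : ℕ} (v : Fin n → α)
    (h : v ∘ finRotate n = v) (i j : Fin n) : v i = v j := by
  cases n with
  | zero => exact i.elim0
  | succ n =>
    have h_zero (i : Fin (n + 1)) : v i = v 0 := by
      induction i using Fin.induction with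
      | zero => rfl
      | succ i ih =>
        rw [← ih, ← Fin.coeSucc_eq_succ, ← finRotate_apply]
        exact congrFun h i.castSucc
    rw [h_zero i, h_zero j]

theorem neg_matA_one_eq (J : ℕ) (x : ℕ → ℝ) :
    -matA J 1 x = diagonal (fun i : Fin J => 2 * x i) - (finRotate J).permMatrix ℝ -
      ((finRotate J).permMatrix ℝ)ᵀ := by
  cases J with
  | zero => exact Subsingleton.elim _ _
  | succ n =>
    ext i j
    simp only [matA, Matrix.neg_apply, of_apply, Matrix.sub_apply, diagonal_apply, transpose_apply,
      PEquiv.toMatrix_apply, toPEquiv_apply, Option.mem_def, Option.some.injEq, finRotate_apply,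
      Fin.ext_iff, Fin.val_add_one, Fin.val_last, add_tsub_cancel_right]
    have := i.isLt
    have := j.isLt
    split_ifs <;> first | omega | ring

theorem detA_pos_sign_general (J : ℕ) (x : ℕ → ℝ)
    (hx : ∀ i < J, 1 ≤ x i) (hne : ∃ i < J, x i ≠ 1) :
    0 < (-1 : ℝ) ^ J * (matA J 1 x).det := by
  obtain ⟨k, hkJ, hk⟩ := hne
  have hpd := posDef_diagonal_sub_permMatrix (finRotate J) apply_eq_of_comp_finRotate_eq
    (x := fun i : Fin J => x i) (fun i => hx i i.isLt) ⟨⟨k, hkJ⟩, (hx k hkJ).lt_of_ne' hk⟩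
  rw [← neg_matA_one_eq] at hpd
  simpa only [det_neg, Fintype.card_fin] using hpd.det_pos

/-- Lemma 7.7(c): if all `xᵢ ≥ 1` and not all `xᵢ = 1`, then
`sign (det A_J^+(x)) = (-1)^J`. -/
theorem detA_pos_sign (J : ℕ) (hJ : 1 ≤ J) (x : ℕ → ℝ)
    (hx : ∀ i < J, 1 ≤ x i) (hne : ∃ i < J, x i ≠ 1) :
    0 < (-1 : ℝ) ^ J * (matA J 1 x).det :=
  detA_pos_sign_general J x hx hne
end

section
/- Let J ≥ 1 and let x_1,…,x_J be real numbers with x_i ≥ 1 for all i. Then the sign of det A_J^−(x_1,…,x_J) equals (−1)^J, i.e. (−1)^J·det A_J^−(x_1,…,x_J) > 0. (Lemma 7.7(d)) -/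
/-!
Write `-A_J^-(x) = 2 diag(xᵢ - 1) + L`, where `L` is the Laplacian of the `J`-cycle whose closing
edge carries the sign `-1`, with quadratic form `∑ (vᵢ - vᵢ₊₁)² + (v_J + v₁)²`. This form vanishes
only if `v` is constant along the path and `v_J = -v₁`, i.e. `v = 0`. Hence for `xᵢ ≥ 1` the
matrix `-A_J^-` is positive definite and `(-1)^J det A_J^- = det (-A_J^-) > 0`.
-/

open Finset Matrix

theorem matA_isHermitian (J : ℕ) (ε : ℝ) (x : ℕ → ℝ) : (matA J ε x).IsHermitian := by
  ext i j
  obtain rfl | hij := eq_or_ne i j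
  · rfl
  have := Fin.val_ne_of_ne hij
  simp only [conjTranspose_apply, matA, of_apply, star_trivial]
  split_ifs <;> first | ring1 | (exfalso; omega)

def unbalancedCycleForm (n : ℕ) (w : ℕ → ℝ) : ℝ :=
  ∑ a ∈ range n, (w a - w (a + 1)) ^ 2 + (w 0 + w n) ^ 2

theorem unbalancedCycleForm_pos {n a : ℕ} {w : ℕ → ℝ} (ha : a ≤ n) (hw : w a ≠ 0) :
    0 < unbalancedCycleForm n w := by
  refine (add_nonneg (sum_nonneg fun _ _ => sq_nonneg _) (sq_nonneg _)).lt_of_ne' fun h => hw ?_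
  obtain ⟨hpath, hclose⟩ :=
    (add_eq_zero_iff_of_nonneg (sum_nonneg fun _ _ => sq_nonneg _) (sq_nonneg _)).mp h
  have hstep : ∀ b < n, w (b + 1) = w b := fun b hb => by
    have := (sum_eq_zero_iff_of_nonneg fun _ _ => sq_nonneg _).mp hpath b (mem_range.mpr hb)
    linarith [pow_eq_zero_iff two_ne_zero |>.mp this]
  have hconst : ∀ b ≤ n, w b = w 0 := by
    intro b hb
    induction b with
    | zero => rfl
    | succ b ih => rw [hstep b hb, ih (by omega)]
  have h0 : w 0 = 0 := by linarith [hconst n le_rfl, pow_eq_zero_iff two_ne_zero |>.mp hclose]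
  rw [hconst a ha, h0]

theorem unbalancedCycleForm_eq (n : ℕ) (w : ℕ → ℝ) :
    unbalancedCycleForm n w = 2 * ∑ a ∈ range (n + 1), w a ^ 2
      - 2 * ∑ a ∈ range n, w a * w (a + 1) + 2 * (w 0 * w n) := by
  have hsq : ∑ a ∈ range n, (w a - w (a + 1)) ^ 2 = ∑ a ∈ range n, w a ^ 2
      + ∑ a ∈ range n, w (a + 1) ^ 2 - 2 * ∑ a ∈ range n, w a * w (a + 1) := by
    rw [mul_sum, ← sum_add_distrib, ← sum_sub_distrib]
    exact sum_congr rfl fun a _ => by ring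
  rw [unbalancedCycleForm, hsq]
  linear_combination -sum_range_succ (fun a => w a ^ 2) n - sum_range_succ' (fun a => w a ^ 2) n

theorem sum_range_sum_range_ite_succ_eq {M : Type*} [AddCommMonoid M] (n : ℕ) (f : ℕ → ℕ → M) :
    ∑ a ∈ range (n + 1), ∑ b ∈ range (n + 1), (if a + 1 = b then f a b else 0)
      = ∑ a ∈ range n, f a (a + 1) := by
  simp only [sum_ite_eq, mem_range, add_lt_add_iff_right]
  rw [sum_range_succ, if_neg (lt_irrefl n), add_zero]
  exact sum_congr rfl fun a ha => if_pos (mem_range.mp ha)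

theorem dotProduct_neg_matA_mulVec (n : ℕ) (x w : ℕ → ℝ) :
    (fun i : Fin (n + 1) => w i) ⬝ᵥ (-matA (n + 1) (-1) x) *ᵥ (fun i => w i)
      = unbalancedCycleForm n w + 2 * ∑ a ∈ range (n + 1), (x a - 1) * w a ^ 2 := by
  have hsum : (fun i : Fin (n + 1) => w i) ⬝ᵥ (-matA (n + 1) (-1) x) *ᵥ (fun i => w i)
      = ∑ a ∈ range (n + 1), ∑ b ∈ range (n + 1),
          ((if a = b then 2 * x a * w a * w b else 0)
          - (if a + 1 = b then w a * w b else 0)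
          - (if b + 1 = a then w a * w b else 0)
          + (if a = 0 ∧ b = n then w a * w b else 0)
          + (if b = 0 ∧ a = n then w a * w b else 0)) := by
    simp only [dotProduct, mulVec, mul_sum, sum_range]
    refine sum_congr rfl fun a _ => sum_congr rfl fun b _ => ?_
    simp only [matA, Matrix.neg_apply, Matrix.of_apply, add_tsub_cancel_right]
    split_ifs <;> first | ring1 | (exfalso; omega)
  have hdiag : ∑ a ∈ range (n + 1), ∑ b ∈ range (n + 1),
      (if a = b then 2 * x a * w a * w b else 0) = ∑ a ∈ range (n + 1), 2 * x a * w a ^ 2 := by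
    refine sum_congr rfl fun a ha => ?_
    rw [sum_ite_eq, if_pos ha]
    ring
  have hnext := sum_range_sum_range_ite_succ_eq n fun a b => w a * w b
  have hprev : ∑ a ∈ range (n + 1), ∑ b ∈ range (n + 1), (if b + 1 = a then w a * w b else 0)
      = ∑ a ∈ range n, w a * w (a + 1) := by
    rw [sum_comm]
    simpa only [mul_comm] using hnext
  have hfirst : ∑ a ∈ range (n + 1), ∑ b ∈ range (n + 1),
      (if a = 0 ∧ b = n then w a * w b else 0) = w 0 * w n := by
    simp [ite_and]
  have hlast : ∑ a ∈ range (n + 1), ∑ b ∈ range (n + 1),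
      (if b = 0 ∧ a = n then w a * w b else 0) = w 0 * w n := by
    rw [sum_comm]
    simpa only [mul_comm] using hfirst
  have hweights : ∑ a ∈ range (n + 1), 2 * x a * w a ^ 2
      = 2 * ∑ a ∈ range (n + 1), (x a - 1) * w a ^ 2 + 2 * ∑ a ∈ range (n + 1), w a ^ 2 := by
    rw [mul_sum, mul_sum, ← sum_add_distrib]
    exact sum_congr rfl fun a _ => by ring
  rw [hsum]
  simp only [sum_add_distrib, sum_sub_distrib]
  rw [hdiag, hnext, hprev, hfirst, hlast, hweights, unbalancedCycleForm_eq]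
  ring

theorem posDef_neg_matA {J : ℕ} {x : ℕ → ℝ} (hx : ∀ i < J, 1 ≤ x i) :
    (-matA J (-1) x).PosDef := by
  refine PosDef.of_dotProduct_mulVec_pos (matA_isHermitian J (-1) x).neg fun v hv => ?_
  obtain _ | n := J
  · exact absurd (Subsingleton.elim v 0) hv
  obtain ⟨i, hi⟩ := Function.ne_iff.mp hv
  set w : ℕ → ℝ := fun a => if h : a < n + 1 then v ⟨a, h⟩ else 0
  have hvw : v = fun i : Fin (n + 1) => w i := funext fun i => by simp [w, i.is_le]
  rw [star_trivial, hvw, dotProduct_neg_matA_mulVec]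
  refine add_pos_of_pos_of_nonneg (unbalancedCycleForm_pos i.is_le ?_) ?_
  · simpa [w, i.is_le] using hi
  · exact mul_nonneg zero_le_two <| sum_nonneg fun a ha =>
      mul_nonneg (sub_nonneg.mpr (hx a (mem_range.mp ha))) (sq_nonneg _)

theorem detA_neg_sign_general (J : ℕ) (x : ℕ → ℝ)
    (hx : ∀ i < J, 1 ≤ x i) :
    0 < (-1 : ℝ) ^ J * (matA J (-1) x).det := by
  simpa [det_neg] using (posDef_neg_matA hx).det_pos

/-- Lemma 7.7(d): if all `xᵢ ≥ 1`, then `sign (det A_J^-(x)) = (-1)^J`. -/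
theorem detA_neg_sign (J : ℕ) (hJ : 1 ≤ J) (x : ℕ → ℝ)
    (hx : ∀ i < J, 1 ≤ x i) :
    0 < (-1 : ℝ) ^ J * (matA J (-1) x).det :=
  detA_neg_sign_general J x hx
end

section
/- Let J ≥ 1 and let x_1,…,x_J be real numbers with x_i ≥ 1 for all i and (x_1,…,x_J) ≠ (1,…,1). Then the real symmetric matrix A_J^+(x_1,…,x_J) is negative definite. (Claim established in the proof of Lemma 7.7(c)) -/
/-!
Reading the indices cyclically in `Fin J`, the corner entries of `A_J^+` close the path into a
cycle, and the quadratic form becomes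
`vᵀ A v = -∑ᵢ (v_{i+1} - v_i)² - 2 ∑ᵢ (xᵢ - 1) vᵢ²`.
Both sums are nonnegative when all `xᵢ ≥ 1`; the first vanishes only for constant `v`, and the
second then forces `v = 0` at an index with `xᵢ > 1`.
-/

open Matrix

/-- A real matrix is negative definite if it is symmetric (Hermitian) and the associated
quadratic form is negative on all nonzero vectors. -/
def Matrix.IsNegDef {n : Type*} [Fintype n] (M : Matrix n n ℝ) : Prop :=
  M.IsHermitian ∧ ∀ v : n → ℝ, v ≠ 0 → v ⬝ᵥ M.mulVec v < 0

theorem matA_isSymm (J : ℕ) (ε : ℝ) (x : ℕ → ℝ) : (matA J ε x).IsSymm := by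
  ext i j
  obtain rfl | hij := eq_or_ne i j
  · rfl
  simp only [transpose_apply, matA, of_apply, Fin.val_ne_of_ne hij, Fin.val_ne_of_ne hij.symm]
  split_ifs <;> first | (exfalso; omega) | ring

theorem matA_one_apply (K : ℕ) (x : ℕ → ℝ) (i j : Fin (K + 1)) :
    matA (K + 1) 1 x i j = (if i = j then -2 * x i else 0)
      + (if j = i + 1 then 1 else 0) + (if i = j + 1 then 1 else 0) := by
  simp only [matA, of_apply, Fin.ext_iff, Fin.val_add_one, Fin.val_last, Nat.add_sub_cancel]
  split_ifs <;> first | (exfalso; omega) | ring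

theorem matA_one_mulVec (K : ℕ) (x : ℕ → ℝ) (v : Fin (K + 1) → ℝ) (i : Fin (K + 1)) :
    (matA (K + 1) 1 x *ᵥ v) i = -2 * x i * v i + v (i + 1) + v (i - 1) := by
  have hpred : ∀ j : Fin (K + 1), i = j + 1 ↔ j = i - 1 := fun j => by
    rw [eq_sub_iff_add_eq, eq_comm]
  simp only [mulVec, dotProduct, matA_one_apply, hpred, add_mul, ite_mul, one_mul, zero_mul,
    Finset.sum_add_distrib, Finset.sum_ite_eq, Finset.sum_ite_eq', Finset.mem_univ, if_true]

theorem matA_one_quadForm (K : ℕ) (x : ℕ → ℝ) (v : Fin (K + 1) → ℝ) :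
    v ⬝ᵥ (matA (K + 1) 1 x *ᵥ v)
      = -∑ i, (v (i + 1) - v i) ^ 2 - 2 * ∑ i : Fin (K + 1), (x i - 1) * v i ^ 2 := by
  have hpred : ∑ i, v i * v (i - 1) = ∑ i, v (i + 1) * v i := by
    simpa using (Equiv.sum_comp (Equiv.addRight 1) fun i => v i * v (i - 1)).symm
  have hsq : ∑ i, v (i + 1) ^ 2 = ∑ i, v i ^ 2 := Equiv.sum_comp (Equiv.addRight 1) (v · ^ 2)
  calc v ⬝ᵥ (matA (K + 1) 1 x *ᵥ v)
      = ∑ i : Fin (K + 1), (-2 * x i * v i ^ 2 + 2 * (v (i + 1) * v i)) := by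
        simp only [dotProduct, matA_one_mulVec, mul_add, Finset.sum_add_distrib, hpred]
        simp only [← Finset.sum_add_distrib]
        exact Finset.sum_congr rfl fun i _ => by ring
    _ = ∑ i, (-(v (i + 1) - v i) ^ 2 - 2 * ((x i - 1) * v i ^ 2) + (v (i + 1) ^ 2 - v i ^ 2)) :=
        Finset.sum_congr rfl fun i _ => by ring
    _ = _ := by
        simp only [Finset.sum_add_distrib, Finset.sum_sub_distrib, Finset.sum_neg_distrib, hsq,
          ← Finset.mul_sum]
        ring

theorem Fin.apply_eq_apply_zero_of_periodic {α : Type*} {K : ℕ} {v : Fin (K + 1) → α}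
    (h : Function.Periodic v 1) (i : Fin (K + 1)) : v i = v 0 :=
  Fin.induction rfl (fun j ih => by rw [← Fin.coeSucc_eq_succ, h, ih]) i

theorem matA_pos_negDef_general (J : ℕ) (x : ℕ → ℝ)
    (hx : ∀ i < J, 1 ≤ x i) (hne : ∃ i < J, x i ≠ 1) :
    (matA J 1 x).IsNegDef := by
  obtain ⟨k, hk, hxk⟩ := hne
  obtain ⟨K, rfl⟩ : ∃ K, J = K + 1 := ⟨J - 1, by omega⟩
  refine ⟨isHermitian_iff_isSymm.mpr (matA_isSymm _ _ _), fun v hv => ?_⟩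
  have hweight : ∀ i : Fin (K + 1), 0 ≤ (x i - 1) * v i ^ 2 := fun i =>
    mul_nonneg (sub_nonneg.mpr (hx i i.isLt)) (sq_nonneg _)
  rw [matA_one_quadForm]
  have hdiff_nonneg : 0 ≤ ∑ i, (v (i + 1) - v i) ^ 2 :=
    Finset.sum_nonneg fun i _ => sq_nonneg _
  have hweight_nonneg : 0 ≤ ∑ i : Fin (K + 1), (x i - 1) * v i ^ 2 :=
    Finset.sum_nonneg fun i _ => hweight i
  by_contra! hge
  have hdiff : ∑ i, (v (i + 1) - v i) ^ 2 = 0 := by linarith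
  have hsum : ∑ i : Fin (K + 1), (x i - 1) * v i ^ 2 = 0 := by linarith
  have hconst : ∀ i, v i = v 0 := Fin.apply_eq_apply_zero_of_periodic fun i => by
    have := (Finset.sum_eq_zero_iff_of_nonneg fun i _ => sq_nonneg _).mp hdiff i (Finset.mem_univ _)
    simpa [sub_eq_zero] using this
  have hvk : v ⟨k, hk⟩ = 0 := by
    have := (Finset.sum_eq_zero_iff_of_nonneg fun i _ => hweight i).mp hsum ⟨k, hk⟩
      (Finset.mem_univ _)
    simpa [sub_eq_zero, hxk] using this
  exact hv (funext fun i => by rw [hconst i, ← hconst ⟨k, hk⟩, hvk, Pi.zero_apply])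

/-- Claim from the proof of Lemma 7.7(c): if all `xᵢ ≥ 1` and not all `xᵢ = 1`,
then `A_J^+(x₁,…,x_J)` is negative definite. -/
theorem matA_pos_negDef (J : ℕ) (hJ : 1 ≤ J) (x : ℕ → ℝ)
    (hx : ∀ i < J, 1 ≤ x i) (hne : ∃ i < J, x i ≠ 1) :
    (matA J 1 x).IsNegDef :=
  matA_pos_negDef_general J x hx hne
end

section
/- Let ν = 1 or 2 and let {f_J} and {g_J} be skein systems of cyclically symmetric polynomials of parity ν. If ν = 1, assume f_1(0) = g_1(0) and f_J(1,…,1) = g_J(1,…,1) for every odd J ≥ 1. If ν = 2, assume f_2(0,0) = g_2(0,0), f_2(1,0) = g_2(1,0), and f_J(1,…,1) = g_J(1,…,1) for every even J ≥ 2. Then f_J = g_J as polynomials for every J. (Lemma 7.3) -/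
/-- A family `f_J(x₁,…,x_J)` (encoded as functions `f J : (ℕ → ℝ) → ℝ` of `0`-indexed
variables, indexed by `J ≡ ν (mod 2)`, `J ≥ ν`) is a *skein system of cyclically symmetric
polynomials of parity* `ν` if:
(0) `f_J` only depends on the variables `x₁,…,x_J` (part of being a polynomial in them);
(i) `f_J` has degree `≤ 1` in `x₁`;
(ii) `f_J(x₁,…,x_J) = f_J(x_J,x₁,…,x_{J-1})`;
(iii) `f_J(x₁,0,x₃,…,x_J) = f_{J-2}(x₁+x₃,x₄,…,x_J)` for `J ≥ ν + 2`. -/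
def IsSkeinSystem (ν : ℕ) (f : ℕ → (ℕ → ℝ) → ℝ) : Prop :=
  (∀ J, ν ≤ J → J % 2 = ν % 2 → ∀ x y : ℕ → ℝ, (∀ i < J, x i = y i) → f J x = f J y) ∧
  (∀ J, ν ≤ J → J % 2 = ν % 2 → ∀ x : ℕ → ℝ, ∃ a b : ℝ, ∀ t : ℝ,
      f J (Function.update x 0 t) = a * t + b) ∧
  (∀ J, ν ≤ J → J % 2 = ν % 2 → ∀ x : ℕ → ℝ,
      f J x = f J (fun i => if i = 0 then x (J - 1) else x (i - 1))) ∧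
  (∀ J, ν + 2 ≤ J → J % 2 = ν % 2 → ∀ x : ℕ → ℝ, x 1 = 0 →
      f J x = f (J - 2) (fun i => if i = 0 then x 0 + x 2 else x (i + 2)))

/-- A skein system with vanishing normalization data vanishes identically. -/
theorem skeinSystem_zero (ν : ℕ) (hν : ν = 1 ∨ ν = 2)
    (h : ℕ → (ℕ → ℝ) → ℝ) (hh : IsSkeinSystem ν h)
    (h0 : h ν (fun _ => 0) = 0)
    (h1 : ν = 2 → h 2 (fun i => if i = 0 then 1 else 0) = 0)
    (hones : ∀ J, ν ≤ J → J % 2 = ν % 2 → h J (fun _ => 1) = 0) :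
    ∀ J, ν ≤ J → J % 2 = ν % 2 → ∀ x : ℕ → ℝ, h J x = 0 := by
  obtain ⟨dep, aff, cyc, skein⟩ := hh
  have hν1 : 1 ≤ ν := by omega
  -- an affine function vanishing at 0 and 1 vanishes
  have L4 : ∀ a b : ℝ, a * 0 + b = 0 → a * 1 + b = 0 → ∀ t : ℝ, a * t + b = 0 := by
    intro a b e0 e1 t
    have hb : b = 0 := by linarith
    have ha : a = 0 := by linarith
    simp [ha, hb]
  -- rotation by any amount
  have L2 : ∀ J, ν ≤ J → J % 2 = ν % 2 → ∀ m, ∀ x : ℕ → ℝ,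
      h J (fun i => x ((i + m) % J)) = h J x := by
    intro J hJ hJ2 m
    have step : ∀ y : ℕ → ℝ, h J (fun i => y ((i + 1) % J)) = h J y := by
      intro y
      rw [cyc J hJ hJ2 (fun i => y ((i + 1) % J))]
      apply dep J hJ hJ2
      intro i hi
      rcases Nat.eq_zero_or_pos i with rfl | hpos
      · have e1 : J - 1 + 1 = J := by omega
        simp [e1, Nat.mod_self]
      · rw [if_neg (by omega)]
        have e2 : i - 1 + 1 = i := by omega
        rw [e2, Nat.mod_eq_of_lt hi]
    induction m with
    | zero =>
      intro x
      apply dep J hJ hJ2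
      intro i hi
      simp [Nat.mod_eq_of_lt hi]
    | succ m ih =>
      intro x
      have key : (fun i => x ((i + (m + 1)) % J))
          = (fun i => (fun q => x ((q + m) % J)) ((i + 1) % J)) := by
        funext i
        simp only
        rw [Nat.mod_add_mod]
        have e : i + 1 + m = i + (m + 1) := by omega
        rw [e]
      rw [key]
      exact (step (fun q => x ((q + m) % J))).trans (ih x)
  -- h J is affine in each variable i < J
  have L3 : ∀ J, ν ≤ J → J % 2 = ν % 2 → ∀ i, i < J → ∀ x : ℕ → ℝ,
      ∃ a b : ℝ, ∀ t : ℝ, h J (Function.update x i t) = a * t + b := by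
    intro J hJ hJ2 i hi x
    obtain ⟨a, b, hab⟩ := aff J hJ hJ2 (fun p => x ((p + i) % J))
    refine ⟨a, b, fun t => ?_⟩
    rw [← hab t, ← L2 J hJ hJ2 i (Function.update x i t)]
    apply dep J hJ hJ2
    intro p hp
    by_cases hp0 : p = 0
    · subst hp0
      have e : (0 + i) % J = i := by rw [Nat.zero_add, Nat.mod_eq_of_lt hi]
      rw [e, Function.update_self, Function.update_self]
    · have hne : (p + i) % J ≠ i := by
        intro hEq
        rcases Nat.lt_or_ge (p + i) J with hlt | hge
        · rw [Nat.mod_eq_of_lt hlt] at hEq; omega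
        · rw [Nat.mod_eq_sub_mod hge, Nat.mod_eq_of_lt (by omega)] at hEq; omega
      simp only [Function.update_of_ne hne, Function.update_of_ne hp0]
  -- if some variable i < J is 0 and h_(J-2) ≡ 0, then h J x = 0
  have L5 : ∀ J, ν + 2 ≤ J → J % 2 = ν % 2 →
      (∀ x : ℕ → ℝ, h (J - 2) x = 0) → ∀ i, i < J → ∀ x : ℕ → ℝ, x i = 0 → h J x = 0 := by
    intro J hJ hJ2 IH i hi x hxi
    rw [← L2 J (by omega) hJ2 (i + (J - 1)) x]
    have h1m : (1 + (i + (J - 1))) % J = i := by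
      have e : 1 + (i + (J - 1)) = i + J := by omega
      rw [e, Nat.add_mod_right, Nat.mod_eq_of_lt hi]
    rw [skein J hJ hJ2 _ (by simp only [h1m]; exact hxi)]
    exact IH _
  -- induction step: h_(J-2) ≡ 0 implies h_J ≡ 0
  have L6 : ∀ J, ν + 2 ≤ J → J % 2 = ν % 2 → (∀ x : ℕ → ℝ, h (J - 2) x = 0) →
      ∀ x : ℕ → ℝ, h J x = 0 := by
    intro J hJ hJ2 IH x
    have claim : ∀ d, d ≤ J → h J (fun i => if i < J - d then 1 else x i) = 0 := by
      intro d
      induction d with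
      | zero =>
        intro _
        rw [dep J (by omega) hJ2 _ (fun _ => 1) (fun i hi => by rw [Nat.sub_zero, if_pos hi])]
        exact hones J (by omega) hJ2
      | succ d ihd =>
        intro hd
        have hkJ : J - (d + 1) < J := by omega
        set k := J - (d + 1) with hk
        obtain ⟨a, b, hab⟩ := L3 J (by omega) hJ2 k hkJ (fun i => if i < k then (1 : ℝ) else x i)
        have e0 : a * 0 + b = 0 := by
          rw [← hab 0]
          exact L5 J hJ hJ2 IH k hkJ _ (by rw [Function.update_self])
        have e1 : a * 1 + b = 0 := by
          rw [← hab 1]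
          have eup : Function.update (fun i => if i < k then (1 : ℝ) else x i) k 1
              = fun i => if i < J - d then (1 : ℝ) else x i := by
            funext i
            rcases eq_or_ne i k with rfl | hne
            · rw [Function.update_self, if_pos (by omega)]
            · rw [Function.update_of_ne hne]
              by_cases hik : i < k
              · rw [if_pos hik, if_pos (by omega)]
              · rw [if_neg hik, if_neg (by omega)]
          rw [eup]
          exact ihd (by omega)
        calc h J (fun i => if i < k then (1 : ℝ) else x i)
            = h J (Function.update (fun i => if i < k then (1 : ℝ) else x i) k
                ((fun i => if i < k then (1 : ℝ) else x i) k)) := by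
              rw [Function.update_eq_self]
          _ = 0 := by rw [hab]; exact L4 a b e0 e1 _
    have hJJ := claim J le_rfl
    refine Eq.trans ?_ hJJ
    apply dep J (by omega) hJ2
    intro i hi
    simp
  -- base case ν = 1
  have base1 : ν = 1 → ∀ x : ℕ → ℝ, h 1 x = 0 := by
    intro e x
    obtain ⟨a, b, hab⟩ := aff 1 (by omega) (by omega) x
    have e0 : a * 0 + b = 0 := by
      rw [← hab 0]
      rw [dep 1 (by omega) (by omega) _ (fun _ => 0)
        (fun i hi => by interval_cases i; simp)]
      rw [← e]; exact h0
    have e1 : a * 1 + b = 0 := by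
      rw [← hab 1]
      rw [dep 1 (by omega) (by omega) _ (fun _ => 1)
        (fun i hi => by interval_cases i; simp)]
      exact hones 1 (by omega) (by omega)
    calc h 1 x = h 1 (Function.update x 0 (x 0)) := by rw [Function.update_eq_self]
      _ = 0 := by rw [hab]; exact L4 a b e0 e1 _
  -- base case ν = 2
  have base2 : ν = 2 → ∀ x : ℕ → ℝ, h 2 x = 0 := by
    intro e x
    set F : ℝ → ℝ → ℝ := fun u v => h 2 (fun i => if i = 0 then u else v) with hF
    have Fsymm : ∀ u v, F u v = F v u := by
      intro u v
      calc F u v = h 2 (fun p => (fun i => if i = 0 then u else v) ((p + 1) % 2)) :=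
            (L2 2 (by omega) (by omega) 1 _).symm
        _ = F v u := by
            apply dep 2 (by omega) (by omega)
            intro p hp
            interval_cases p <;> norm_num
    have Faff : ∀ v : ℝ, ∃ a b : ℝ, ∀ u, F u v = a * u + b := by
      intro v
      obtain ⟨a, b, hab⟩ := aff 2 (by omega) (by omega) (fun _ => v)
      refine ⟨a, b, fun u => ?_⟩
      rw [← hab u]
      apply dep 2 (by omega) (by omega)
      intro i hi
      interval_cases i <;> simp
    have F00 : F 0 0 = 0 := by
      have h0' : h 2 (fun _ => (0 : ℝ)) = 0 := by rw [← e]; exact h0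
      refine (dep 2 (by omega) (by omega) _ (fun _ => 0) ?_).trans h0'
      intro i hi; simp
    have F10 : F 1 0 = 0 := h1 e
    have F11 : F 1 1 = 0 := by
      refine (dep 2 (by omega) (by omega) _ (fun _ => 1) ?_).trans (hones 2 (by omega) (by omega))
      intro i hi; simp
    have F01 : F 0 1 = 0 := by rw [Fsymm]; exact F10
    have row0 : ∀ u, F u 0 = 0 := by
      intro u
      obtain ⟨a, b, hab⟩ := Faff 0
      rw [hab]
      exact L4 a b (by rw [← hab]; exact F00) (by rw [← hab]; exact F10) u
    have row1 : ∀ u, F u 1 = 0 := by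
      intro u
      obtain ⟨a, b, hab⟩ := Faff 1
      rw [hab]
      exact L4 a b (by rw [← hab]; exact F01) (by rw [← hab]; exact F11) u
    have allF : ∀ u v, F u v = 0 := by
      intro u v
      rw [Fsymm]
      obtain ⟨a, b, hab⟩ := Faff u
      rw [hab]
      exact L4 a b (by rw [← hab, Fsymm]; exact row0 u) (by rw [← hab, Fsymm]; exact row1 u) v
    calc h 2 x = F (x 0) (x 1) := by
          apply dep 2 (by omega) (by omega)
          intro i hi
          interval_cases i <;> simp
      _ = 0 := allF _ _
  -- main induction
  intro J
  induction J using Nat.strong_induction_on with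
  | _ J IH =>
    intro hJ hJ2 x
    rcases eq_or_ne J ν with rfl | hne
    · rcases hν with rfl | rfl
      · exact base1 rfl x
      · exact base2 rfl x
    · have hJ2' : ν + 2 ≤ J := by omega
      exact L6 J hJ2' hJ2 (fun y => IH (J - 2) (by omega) (by omega) (by omega) y) x

/-- Lemma 7.3: a skein system of parity `ν ∈ {1,2}` is uniquely determined by its values
`c_J = f_J(1,…,1)` together with `c₀ = f_ν(0,…,0)` (and, for `ν = 2`, also `c₁ = f₂(1,0)`). -/
theorem skeinSystem_unique (ν : ℕ) (hν : ν = 1 ∨ ν = 2)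
    (f g : ℕ → (ℕ → ℝ) → ℝ) (hf : IsSkeinSystem ν f) (hg : IsSkeinSystem ν g)
    (h0 : f ν (fun _ => 0) = g ν (fun _ => 0))
    (h1 : ν = 2 → f 2 (fun i => if i = 0 then 1 else 0) = g 2 (fun i => if i = 0 then 1 else 0))
    (hones : ∀ J, ν ≤ J → J % 2 = ν % 2 → f J (fun _ => 1) = g J (fun _ => 1)) :
    ∀ J, ν ≤ J → J % 2 = ν % 2 → ∀ x : ℕ → ℝ, f J x = g J x := by
  obtain ⟨df, af, cf, sf⟩ := hf
  obtain ⟨dg, ag, cg, sg⟩ := hg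
  have key := skeinSystem_zero ν hν (fun J x => f J x - g J x)
    ⟨fun J hJ hJ2 x y hxy => by
       show f J x - g J x = f J y - g J y
       rw [df J hJ hJ2 x y hxy, dg J hJ hJ2 x y hxy],
     fun J hJ hJ2 x => by
       obtain ⟨a1, b1, h1'⟩ := af J hJ hJ2 x
       obtain ⟨a2, b2, h2'⟩ := ag J hJ hJ2 x
       exact ⟨a1 - a2, b1 - b2, fun t => by
         show f J (Function.update x 0 t) - g J (Function.update x 0 t) = _
         rw [h1' t, h2' t]; ring⟩,
     fun J hJ hJ2 x => by
       show f J x - g J x = _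
       rw [cf J hJ hJ2 x, cg J hJ hJ2 x],
     fun J hJ hJ2 x hx1 => by
       show f J x - g J x = _
       rw [sf J hJ hJ2 x hx1, sg J hJ hJ2 x hx1]⟩
    (by show f ν (fun _ => 0) - g ν (fun _ => 0) = 0; rw [h0]; ring)
    (fun e => by
       show f 2 (fun i => if i = 0 then 1 else 0) - g 2 (fun i => if i = 0 then 1 else 0) = 0
       rw [h1 e]; ring)
    (fun J hJ hJ2 => by
       show f J (fun _ => 1) - g J (fun _ => 1) = 0
       rw [hones J hJ hJ2]; ring)
  intro J hJ hJ2 x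
  have hz : f J x - g J x = 0 := key J hJ hJ2 x
  linarith
end

section
/- Fix an integer k ≥ 1 and let ν = 1 if k is odd and ν = 2 if k is even. Then the sequence {f_{J,k}}_{J = ν, ν+2, ν+4, …} (with the convention that f_{J,k} = 0 when J < k) is a skein system of cyclically symmetric polynomials of parity ν; that is, it satisfies conditions (i), (ii) and (iii). (Lemma A.1) -/
/-- The edge of the cycle on `{0, …, J-1}` starting at vertex `s` (`0`-indexed version of
the edges `{1,2}, {2,3}, …, {J-1,J}, {J,1}`). -/
def cycEdge (J s : ℕ) : Finset ℕ := {s, (s + 1) % J}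

/-- `[[J]]_k`: collections of pairwise disjoint edges of the cycle on `J` vertices
(each edge recorded by its starting vertex) covering exactly `J - k` vertices, i.e.
consisting of `(J-k)/2` pairwise disjoint edges. -/
def edgeCollections (J k : ℕ) : Finset (Finset ℕ) :=
  (Finset.range J).powerset.filter fun A =>
    ((A.biUnion fun s => cycEdge J s).card + k = J) ∧ (2 * A.card + k = J)

/-- The homogeneous degree-`k` polynomial `f_{J,k}(x₁,…,x_J) = ∑_{A ∈ [[J]]_k} x_A`,
where `x_A` is the product of the variables at vertices not covered by `A`. -/
def fJk (J k : ℕ) (x : ℕ → ℝ) : ℝ :=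
  ∑ A ∈ edgeCollections J k, ∏ j ∈ (Finset.range J) \ (A.biUnion fun s => cycEdge J s), x j

namespace Skein

def cov (J : ℕ) (A : Finset ℕ) : Finset ℕ := A.biUnion fun s => cycEdge J s

lemma fJk_eq (J k : ℕ) (x : ℕ → ℝ) :
    fJk J k x = ∑ A ∈ edgeCollections J k, ∏ j ∈ (Finset.range J) \ cov J A, x j := rfl

lemma mem_EC {J k : ℕ} {A : Finset ℕ} : A ∈ edgeCollections J k ↔
    A ⊆ Finset.range J ∧ (cov J A).card + k = J ∧ 2 * A.card + k = J := by
  simp [edgeCollections, cov, Finset.mem_filter, Finset.mem_powerset, and_assoc]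

lemma cov_subset {J : ℕ} {A : Finset ℕ} (hA : A ⊆ Finset.range J) :
    cov J A ⊆ Finset.range J := by
  intro j hj
  simp only [cov, Finset.mem_biUnion] at hj
  obtain ⟨s, hs, hjs⟩ := hj
  have hsJ : s < J := Finset.mem_range.1 (hA hs)
  simp only [cycEdge, Finset.mem_insert, Finset.mem_singleton] at hjs
  have : (s+1) % J < J := Nat.mod_lt _ (by omega)
  rcases hjs with h | h <;> exact Finset.mem_range.2 (by omega)


lemma edge_card_le (J s : ℕ) : (cycEdge J s).card ≤ 2 := by
  classical
  simp only [cycEdge]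
  exact (Finset.card_insert_le _ _).trans (by simp)

lemma disj_of_card (J : ℕ) {A : Finset ℕ} (h : (cov J A).card = 2 * A.card) :
    (∀ s ∈ A, (cycEdge J s).card = 2) ∧
      (∀ s ∈ A, ∀ t ∈ A, s ≠ t → Disjoint (cycEdge J s) (cycEdge J t)) := by
  classical
  constructor
  · intro s hs
    by_contra hcard
    have h1 : (cycEdge J s).card ≤ 1 := by
      have := edge_card_le J s
      omega
    have hsub : cov J A ⊆ (cov J (A.erase s)) ∪ cycEdge J s := by
      intro j hj
      simp only [cov, Finset.mem_biUnion, Finset.mem_union] at hj ⊢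
      obtain ⟨t, ht, hjt⟩ := hj
      by_cases hts : t = s
      · exact Or.inr (hts ▸ hjt)
      · exact Or.inl ⟨t, Finset.mem_erase.2 ⟨hts, ht⟩, hjt⟩
    have hle : (cov J A).card ≤ (cov J (A.erase s)).card + 1 :=
      le_trans (Finset.card_le_card hsub) (le_trans (Finset.card_union_le _ _) (by omega))
    have hle2 : (cov J (A.erase s)).card ≤ 2 * (A.erase s).card := by
      refine le_trans Finset.card_biUnion_le ?_
      calc ∑ t ∈ A.erase s, (cycEdge J t).card ≤ ∑ _t ∈ A.erase s, 2 :=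
            Finset.sum_le_sum fun t _ => edge_card_le J t
        _ = 2 * (A.erase s).card := by rw [Finset.sum_const]; ring
    have hcs : (A.erase s).card = A.card - 1 := Finset.card_erase_of_mem hs
    have hApos : 0 < A.card := Finset.card_pos.2 ⟨s, hs⟩
    omega
  · intro s hs t ht hst
    by_contra hdisj
    obtain ⟨x, hxs, hxt⟩ := Finset.not_disjoint_iff.1 hdisj
    have hsub : cov J A ⊆ (cov J (A.erase t)) ∪ (cycEdge J t).erase x := by
      intro j hj
      simp only [cov, Finset.mem_biUnion, Finset.mem_union] at hj ⊢
      obtain ⟨u, hu, hju⟩ := hj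
      by_cases hut : u = t
      · by_cases hjx : j = x
        · exact Or.inl ⟨s, Finset.mem_erase.2 ⟨hst, hs⟩, hjx ▸ hxs⟩
        · exact Or.inr (Finset.mem_erase.2 ⟨hjx, hut ▸ hju⟩)
      · exact Or.inl ⟨u, Finset.mem_erase.2 ⟨hut, hu⟩, hju⟩
    have h1 : ((cycEdge J t).erase x).card ≤ 1 := by
      have := Finset.card_erase_of_mem hxt
      have := edge_card_le J t
      omega
    have hle : (cov J A).card ≤ (cov J (A.erase t)).card + 1 :=
      le_trans (Finset.card_le_card hsub) (le_trans (Finset.card_union_le _ _) (by omega))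
    have hle2 : (cov J (A.erase t)).card ≤ 2 * (A.erase t).card := by
      refine le_trans Finset.card_biUnion_le ?_
      calc ∑ u ∈ A.erase t, (cycEdge J u).card ≤ ∑ _u ∈ A.erase t, 2 :=
            Finset.sum_le_sum fun u _ => edge_card_le J u
        _ = 2 * (A.erase t).card := by rw [Finset.sum_const]; ring
    have hcs : (A.erase t).card = A.card - 1 := Finset.card_erase_of_mem ht
    have hApos : 0 < A.card := Finset.card_pos.2 ⟨t, ht⟩
    omega

end Skein

namespace Skein

lemma prop0 (J k : ℕ) (x y : ℕ → ℝ) (h : ∀ i < J, x i = y i) : fJk J k x = fJk J k y := by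
  rw [fJk_eq, fJk_eq]
  refine Finset.sum_congr rfl fun A _ => Finset.prod_congr rfl fun j hj => ?_
  exact h j (Finset.mem_range.1 (Finset.mem_sdiff.1 hj).1)

lemma prop1 (J k : ℕ) (hJ : 1 ≤ J) (x : ℕ → ℝ) :
    ∃ a b : ℝ, ∀ t : ℝ, fJk J k (Function.update x 0 t) = a * t + b := by
  classical
  refine ⟨∑ A ∈ (edgeCollections J k).filter (fun A => 0 ∉ cov J A),
      ∏ j ∈ ((Finset.range J) \ cov J A).erase 0, x j,
    ∑ A ∈ (edgeCollections J k).filter (fun A => 0 ∈ cov J A),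
      ∏ j ∈ (Finset.range J) \ cov J A, x j, fun t => ?_⟩
  rw [fJk_eq, ← Finset.sum_filter_add_sum_filter_not (edgeCollections J k)
    (fun A => 0 ∉ cov J A)]
  congr 1
  · rw [Finset.sum_mul]
    refine Finset.sum_congr rfl fun A hA => ?_
    have h0 : 0 ∈ Finset.range J \ cov J A := by
      refine Finset.mem_sdiff.2 ⟨Finset.mem_range.2 (by omega), (Finset.mem_filter.1 hA).2⟩
    rw [← Finset.mul_prod_erase _ _ h0, Function.update_self]
    rw [mul_comm]
    congr 1
    refine Finset.prod_congr rfl fun j hj => ?_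
    exact Function.update_of_ne (Finset.mem_erase.1 hj).1 _ _
  · refine Finset.sum_congr (by simp) fun A hA => ?_
    refine Finset.prod_congr rfl fun j hj => ?_
    have hj0 : j ≠ 0 := fun h => (Finset.mem_sdiff.1 hj).2 (h ▸ (Finset.mem_filter.1 hA).2)
    exact Function.update_of_ne hj0 _ _

end Skein

namespace Skein

lemma image_sdiff_injOn {g : ℕ → ℕ} {s t : Finset ℕ} (h : Set.InjOn g ↑s) (hts : t ⊆ s) :
    (s \ t).image g = s.image g \ t.image g := by
  classical
  ext a
  simp only [Finset.mem_image, Finset.mem_sdiff]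
  constructor
  · rintro ⟨j, ⟨hjs, hjt⟩, rfl⟩
    refine ⟨⟨j, hjs, rfl⟩, ?_⟩
    rintro ⟨j', hj't, hj'⟩
    exact hjt (h (hts hj't) hjs hj' ▸ hj't)
  · rintro ⟨⟨j, hjs, rfl⟩, hnt⟩
    exact ⟨j, ⟨hjs, fun hjt => hnt ⟨j, hjt, rfl⟩⟩, rfl⟩

lemma cov_image {J J' : ℕ} {A : Finset ℕ} {σ g : ℕ → ℕ}
    (h : ∀ s ∈ A, cycEdge J' (σ s) = (cycEdge J s).image g) :
    cov J' (A.image σ) = (cov J A).image g := by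
  classical
  simp only [cov, Finset.biUnion_image, Finset.image_biUnion]
  exact Finset.biUnion_congr rfl h

lemma prop2 (J k : ℕ) (hJ : 1 ≤ J) (x : ℕ → ℝ) :
    fJk J k x = fJk J k (fun i => if i = 0 then x (J - 1) else x (i - 1)) := by
  classical
  rcases eq_or_lt_of_le hJ with h1 | h2
  · refine prop0 J k _ _ fun i hi => ?_
    have : i = 0 := by omega
    subst this
    simp [← h1]
  set y : ℕ → ℝ := fun i => if i = 0 then x (J - 1) else x (i - 1) with hy
  set σ : ℕ → ℕ := fun s => (s + 1) % J with hσdef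
  set τ : ℕ → ℕ := fun s => (s + (J - 1)) % J with hτdef
  have hσlt : ∀ s, σ s < J := fun s => Nat.mod_lt _ (by omega)
  have hτlt : ∀ s, τ s < J := fun s => Nat.mod_lt _ (by omega)
  have hσ : ∀ s < J, σ s = if s = J - 1 then 0 else s + 1 := by
    intro s hs
    split_ifs with h
    · subst h
      simp only [hσdef]
      rw [show J - 1 + 1 = J by omega, Nat.mod_self]
    · exact Nat.mod_eq_of_lt (by omega)
  have hτ : ∀ s < J, τ s = if s = 0 then J - 1 else s - 1 := by
    intro s hs
    split_ifs with h
    · subst h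
      simp only [hτdef, Nat.zero_add]
      exact Nat.mod_eq_of_lt (by omega)
    · simp only [hτdef]
      rw [show s + (J - 1) = (s - 1) + J by omega, Nat.add_mod_right]
      exact Nat.mod_eq_of_lt (by omega)
  have hτσ : ∀ s < J, τ (σ s) = s := by
    intro s hs
    rw [hσ s hs]
    split_ifs with h
    · rw [hτ 0 (by omega)]; simp [h]
    · rw [hτ (s + 1) (by omega)]; simp
  have hστ : ∀ s < J, σ (τ s) = s := by
    intro s hs
    rw [hτ s hs]
    split_ifs with h
    · rw [hσ (J - 1) (by omega)]; simp [h]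
    · have h3 := hσ (s - 1) (by omega)
      rw [h3]
      split_ifs with h2 <;> omega
  have hσinj : Set.InjOn σ (Finset.range J : Set ℕ) := by
    intro a ha b hb hab
    simp only [Finset.coe_range, Set.mem_Iio] at ha hb
    rw [← hτσ a ha, ← hτσ b hb, hab]
  have hτinj : Set.InjOn τ (Finset.range J : Set ℕ) := by
    intro a ha b hb hab
    simp only [Finset.coe_range, Set.mem_Iio] at ha hb
    rw [← hστ a ha, ← hστ b hb, hab]
  have hσedge : ∀ s, cycEdge J (σ s) = (cycEdge J s).image σ := by
    intro s
    simp only [cycEdge, Finset.image_insert, Finset.image_singleton, hσdef, Nat.mod_add_mod]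
  have hτedge : ∀ s, cycEdge J (τ s) = (cycEdge J s).image τ := by
    intro s
    have key : (τ s + 1) % J = τ ((s + 1) % J) := by
      show ((s + (J - 1)) % J + 1) % J = ((s + 1) % J + (J - 1)) % J
      rw [Nat.mod_add_mod, Nat.mod_add_mod]
      congr 1
      omega
    simp only [cycEdge, Finset.image_insert, Finset.image_singleton]
    rw [key]
  have hrange : ∀ {g : ℕ → ℕ}, (∀ s, g s < J) → (∀ s < J, ∃ t < J, g t = s) →
      (Finset.range J).image g = Finset.range J := by
    intro g hlt hsurj
    ext a
    simp only [Finset.mem_image, Finset.mem_range]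
    constructor
    · rintro ⟨s, _, rfl⟩; exact hlt s
    · intro ha
      obtain ⟨t, ht, hgt⟩ := hsurj a ha
      exact ⟨t, ht, hgt⟩
  have hσrange : (Finset.range J).image σ = Finset.range J :=
    hrange hσlt fun s hs => ⟨τ s, hτlt s, hστ s hs⟩
  have hmem : ∀ {g : ℕ → ℕ}, (∀ s, cycEdge J (g s) = (cycEdge J s).image g) →
      (∀ s, g s < J) → Set.InjOn g (Finset.range J : Set ℕ) →
      ∀ A ∈ edgeCollections J k, A.image g ∈ edgeCollections J k := by
    intro g hedge hlt hinj A hA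
    obtain ⟨hsub, hcov, hcard⟩ := mem_EC.1 hA
    refine mem_EC.2 ⟨?_, ?_, ?_⟩
    · intro a ha
      obtain ⟨s, _, rfl⟩ := Finset.mem_image.1 ha
      exact Finset.mem_range.2 (hlt s)
    · rw [cov_image fun s _ => hedge s, Finset.card_image_of_injOn
        (hinj.mono (by exact_mod_cast cov_subset hsub))]
      exact hcov
    · rw [Finset.card_image_of_injOn (hinj.mono (by exact_mod_cast hsub))]
      exact hcard
  rw [fJk_eq, fJk_eq]
  refine Finset.sum_nbij' (fun A => A.image σ) (fun A => A.image τ) ?_ ?_ ?_ ?_ ?_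
  · exact fun A hA => hmem hσedge hσlt hσinj A hA
  · exact fun A hA => hmem hτedge hτlt hτinj A hA
  · intro A hA
    have hsub := (mem_EC.1 hA).1
    show (A.image σ).image τ = A
    rw [Finset.image_image]
    rw [show A.image (τ ∘ σ) = A.image id from
      Finset.image_congr fun s hs => hτσ s (Finset.mem_range.1 (hsub hs))]
    exact Finset.image_id
  · intro A hA
    have hsub := (mem_EC.1 hA).1
    show (A.image τ).image σ = A
    rw [Finset.image_image]
    rw [show A.image (σ ∘ τ) = A.image id from
      Finset.image_congr fun s hs => hστ s (Finset.mem_range.1 (hsub hs))]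
    exact Finset.image_id
  · intro A hA
    have hsub := (mem_EC.1 hA).1
    have hcovsub : cov J A ⊆ Finset.range J := cov_subset hsub
    have hset : Finset.range J \ cov J (A.image σ) = (Finset.range J \ cov J A).image σ := by
      rw [cov_image fun s _ => hσedge s]
      conv_lhs => rw [← hσrange]
      exact (image_sdiff_injOn hσinj hcovsub).symm
    rw [hset]
    rw [Finset.prod_image fun a ha b hb hab =>
      hσinj (by exact_mod_cast (Finset.mem_sdiff.1 ha).1)
        (by exact_mod_cast (Finset.mem_sdiff.1 hb).1) hab]
    refine Finset.prod_congr rfl fun j hj => ?_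
    have hjJ : j < J := Finset.mem_range.1 (Finset.mem_sdiff.1 hj).1
    rw [hσ j hjJ]
    split_ifs with h
    · simp [hy, h]
    · simp [hy]


lemma bij_aux (J k c d : ℕ) (g : ℕ → ℕ) (hk : 1 ≤ k) (hJ : 3 ≤ J)
    (hcsmall : c < 2)
    (hce : cycEdge J c = {c, c + 1})
    (hginj : Function.Injective g)
    (hgmem : ∀ i < J - 2, g i < J ∧ g i ≠ c ∧ g i ≠ c + 1)
    (hgsurj : ∀ j < J, j ≠ c → j ≠ c + 1 → ∃ i < J - 2, g i = j)
    (hedge : ∀ b < J - 2, b ≠ d → cycEdge J (b + 2) = (cycEdge (J - 2) b).image g)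
    (hallow : ∀ s < J, s ≠ c → Disjoint (cycEdge J s) (cycEdge J c) →
      2 ≤ s ∧ s - 2 < J - 2 ∧ s - 2 ≠ d)
    (x : ℕ → ℝ) :
    ∑ A ∈ (edgeCollections J k).filter (fun A => c ∈ A),
        ∏ j ∈ Finset.range J \ cov J A, x j
      = ∑ B ∈ (edgeCollections (J - 2) k).filter (fun B => d ∉ B),
        ∏ i ∈ Finset.range (J - 2) \ cov (J - 2) B, x (g i) := by
  classical
  -- basic facts about A's in the source
  have hAfacts : ∀ A ∈ (edgeCollections J k).filter (fun A => c ∈ A),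
      ∀ s ∈ A.erase c, 2 ≤ s ∧ s - 2 < J - 2 ∧ s - 2 ≠ d ∧
        cycEdge J s = (cycEdge (J - 2) (s - 2)).image g := by
    intro A hA s hs
    obtain ⟨hAEC, hcA⟩ := Finset.mem_filter.1 hA
    obtain ⟨hsub, hcov, hcard⟩ := mem_EC.1 hAEC
    have hdisj := (disj_of_card J (A := A) (by omega)).2
    obtain ⟨hsc, hsA⟩ := Finset.mem_erase.1 hs
    have hsJ : s < J := Finset.mem_range.1 (hsub hsA)
    have hd : Disjoint (cycEdge J s) (cycEdge J c) := hdisj s hsA c hcA hsc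
    obtain ⟨h2s, hlt, hnd⟩ := hallow s hsJ hsc hd
    refine ⟨h2s, hlt, hnd, ?_⟩
    have := hedge (s - 2) hlt hnd
    rwa [show s - 2 + 2 = s by omega] at this
  have hcovim : ∀ B : Finset ℕ, (∀ b ∈ B, b < J - 2 ∧ b ≠ d) →
      cov J (B.image (· + 2)) = (cov (J - 2) B).image g := fun B hB =>
    cov_image (fun b hb => hedge b (hB b hb).1 (hB b hb).2)
  have hgcov : ∀ B : Finset ℕ, B ⊆ Finset.range (J - 2) →
      ∀ j ∈ (cov (J - 2) B).image g, j < J ∧ j ≠ c ∧ j ≠ c + 1 := by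
    intro B hB j hj
    obtain ⟨i, hi, rfl⟩ := Finset.mem_image.1 hj
    exact hgmem i (Finset.mem_range.1 (cov_subset hB hi))
  -- cov of insert c S, when S's cover avoids {c, c+1}
  have hcovins : ∀ S : Finset ℕ, cov J (insert c S) = cycEdge J c ∪ cov J S := by
    intro S
    simp [cov, Finset.biUnion_insert]
  have hcardins : ∀ T : Finset ℕ, (∀ j ∈ T, j ≠ c ∧ j ≠ c + 1) →
      (cycEdge J c ∪ T).card = 2 + T.card := by
    intro T hT
    rw [Finset.card_union_of_disjoint, hce]
    · rw [Finset.card_insert_of_notMem (by simp only [Finset.mem_singleton]; omega), Finset.card_singleton]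
    · rw [hce]
      refine Finset.disjoint_left.2 fun j hj hjT => ?_
      have := hT j hjT
      simp only [Finset.mem_insert, Finset.mem_singleton] at hj
      omega
  -- the set identity for products
  have hsetid : ∀ B : Finset ℕ, B ⊆ Finset.range (J - 2) → (∀ b ∈ B, b < J - 2 ∧ b ≠ d) →
      Finset.range J \ cov J (insert c (B.image (· + 2)))
        = (Finset.range (J - 2) \ cov (J - 2) B).image g := by
    intro B hBsub hB
    rw [hcovins, hcovim B hB, hce]
    ext j
    simp only [Finset.mem_sdiff, Finset.mem_union, Finset.mem_image, Finset.mem_range,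
      Finset.mem_insert, Finset.mem_singleton]
    constructor
    · rintro ⟨hjJ, hj⟩
      have hj1 : j ≠ c := fun h => hj (Or.inl (Or.inl h))
      have hj2 : j ≠ c + 1 := fun h => hj (Or.inl (Or.inr h))
      obtain ⟨i, hi, hgi⟩ := hgsurj j hjJ hj1 hj2
      exact ⟨i, ⟨hi, fun hicov => hj (Or.inr ⟨i, hicov, hgi⟩)⟩, hgi⟩
    · rintro ⟨i, ⟨hi, hicov⟩, rfl⟩
      obtain ⟨h1, h2, h3⟩ := hgmem i hi
      refine ⟨h1, ?_⟩
      rintro ((h | h) | ⟨i2, hi2cov, hi2⟩)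
      · exact h2 h
      · exact h3 h
      · exact hicov (hginj hi2 ▸ hi2cov)
  -- forward membership
  have hfwd : ∀ A ∈ (edgeCollections J k).filter (fun A => c ∈ A),
      (A.erase c).image (· - 2) ∈ (edgeCollections (J - 2) k).filter (fun B => d ∉ B) := by
    intro A hA
    obtain ⟨hAEC, hcA⟩ := Finset.mem_filter.1 hA
    obtain ⟨hsub, hcov, hcard⟩ := mem_EC.1 hAEC
    set B := (A.erase c).image (· - 2) with hBdef
    have hmem2 : ∀ b ∈ B, b < J - 2 ∧ b ≠ d := by
      intro b hb
      obtain ⟨s, hs, rfl⟩ := Finset.mem_image.1 hb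
      obtain ⟨_, h2, h3, _⟩ := hAfacts A hA s hs
      exact ⟨h2, h3⟩
    have hback : B.image (· + 2) = A.erase c := by
      rw [hBdef, Finset.image_image]
      rw [show (A.erase c).image ((· + 2) ∘ (· - 2)) = (A.erase c).image id from
        Finset.image_congr fun s hs => by
          have := (hAfacts A hA s hs).1
          simp only [Function.comp_apply, id_eq]
          omega]
      exact Finset.image_id
    have hcovA1 : cov J (A.erase c) = (cov (J - 2) B).image g := by
      rw [← hcovim B hmem2, hback]
    have hAins : insert c (A.erase c) = A := Finset.insert_erase hcA
    have hcovdecomp : cov J A = cycEdge J c ∪ cov J (A.erase c) := by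
      rw [← hAins, hcovins]
      rw [hAins]
    have hcovcard : (cov J A).card = 2 + (cov (J - 2) B).card := by
      rw [hcovdecomp, hcovA1, hcardins _ (fun j hj => (hgcov B (by
        intro b hb
        exact Finset.mem_range.2 (hmem2 b hb).1) j hj).2)]
      rw [Finset.card_image_of_injective _ hginj]
    have hBcard : B.card = A.card - 1 := by
      rw [hBdef, Finset.card_image_of_injOn (fun a ha b hb hab => by
        have h2a := (hAfacts A hA a (Finset.mem_coe.1 ha)).1
        have h2b := (hAfacts A hA b (Finset.mem_coe.1 hb)).1
        have hab2 : a - 2 = b - 2 := hab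
        omega)]
      exact Finset.card_erase_of_mem hcA
    have hApos : 0 < A.card := Finset.card_pos.2 ⟨c, hcA⟩
    refine Finset.mem_filter.2 ⟨mem_EC.2 ⟨?_, by omega, by omega⟩, ?_⟩
    · intro b hb
      exact Finset.mem_range.2 (hmem2 b hb).1
    · intro hd2
      exact absurd rfl (hmem2 d hd2).2
  -- backward membership
  have hbwd : ∀ B ∈ (edgeCollections (J - 2) k).filter (fun B => d ∉ B),
      insert c (B.image (· + 2)) ∈ (edgeCollections J k).filter (fun A => c ∈ A) := by
    intro B hB
    obtain ⟨hBEC, hdB⟩ := Finset.mem_filter.1 hB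
    obtain ⟨hsub, hcov, hcard⟩ := mem_EC.1 hBEC
    have hmem2 : ∀ b ∈ B, b < J - 2 ∧ b ≠ d := fun b hb =>
      ⟨Finset.mem_range.1 (hsub hb), fun h => hdB (h ▸ hb)⟩
    have hcnot : c ∉ B.image (· + 2) := by
      intro hc
      obtain ⟨b, _, hb⟩ := Finset.mem_image.1 hc
      omega
    have hcovcard : (cov J (insert c (B.image (· + 2)))).card = 2 + (cov (J - 2) B).card := by
      rw [hcovins, hcovim B hmem2, hcardins _ (fun j hj => (hgcov B hsub j hj).2)]
      rw [Finset.card_image_of_injective _ hginj]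
    have hAcard : (insert c (B.image (· + 2))).card = B.card + 1 := by
      rw [Finset.card_insert_of_notMem hcnot, Finset.card_image_of_injective _ (by
        intro a b hab
        simpa using hab)]
    refine Finset.mem_filter.2 ⟨mem_EC.2 ⟨?_, by omega, by omega⟩, Finset.mem_insert_self _ _⟩
    intro a ha
    rcases Finset.mem_insert.1 ha with rfl | ha
    · exact Finset.mem_range.2 (by omega)
    · obtain ⟨b, hb, rfl⟩ := Finset.mem_image.1 ha
      exact Finset.mem_range.2 (by have := (hmem2 b hb).1; omega)
  refine Finset.sum_nbij' (fun A => (A.erase c).image (· - 2))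
    (fun B => insert c (B.image (· + 2))) hfwd hbwd ?_ ?_ ?_
  · intro A hA
    have hcA := (Finset.mem_filter.1 hA).2
    show insert c (((A.erase c).image (· - 2)).image (· + 2)) = A
    rw [Finset.image_image]
    rw [show (A.erase c).image ((· + 2) ∘ (· - 2)) = (A.erase c).image id from
      Finset.image_congr fun s hs => by
        have := (hAfacts A hA s hs).1
        simp only [Function.comp_apply, id_eq]
        omega]
    rw [Finset.image_id]
    exact Finset.insert_erase hcA
  · intro B hB
    have hdB := (Finset.mem_filter.1 hB).2
    have hsub := (mem_EC.1 (Finset.mem_filter.1 hB).1).1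
    have hcnot : c ∉ B.image (· + 2) := by
      intro hc
      obtain ⟨b, _, hb⟩ := Finset.mem_image.1 hc
      omega
    show ((insert c (B.image (· + 2))).erase c).image (· - 2) = B
    rw [Finset.erase_insert hcnot, Finset.image_image]
    rw [show B.image ((· - 2) ∘ (· + 2)) = B.image id from
      Finset.image_congr fun b hb => by simp]
    exact Finset.image_id
  · intro A hA
    have hcA := (Finset.mem_filter.1 hA).2
    set B := (A.erase c).image (· - 2) with hBdef
    have hBsub := (mem_EC.1 (Finset.mem_filter.1 (hfwd A hA)).1).1
    have hmem2 : ∀ b ∈ B, b < J - 2 ∧ b ≠ d := by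
      intro b hb
      obtain ⟨s, hs, rfl⟩ := Finset.mem_image.1 hb
      obtain ⟨_, h2, h3, _⟩ := hAfacts A hA s hs
      exact ⟨h2, h3⟩
    have hback : insert c (B.image (· + 2)) = A := by
      rw [hBdef, Finset.image_image]
      rw [show (A.erase c).image ((· + 2) ∘ (· - 2)) = (A.erase c).image id from
        Finset.image_congr fun s hs => by
          have := (hAfacts A hA s hs).1
          simp only [Function.comp_apply, id_eq]
          omega]
      rw [Finset.image_id]
      exact Finset.insert_erase hcA
    have := hsetid B hBsub hmem2
    rw [hback] at this
    rw [this]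
    rw [Finset.prod_image (fun a _ b _ hab => hginj hab)]


lemma prop3 (J k : ℕ) (hk : 1 ≤ k) (hJ : 3 ≤ J) (x : ℕ → ℝ) (hx1 : x 1 = 0) :
    fJk J k x = fJk (J - 2) k (fun i => if i = 0 then x 0 + x 2 else x (i + 2)) := by
  classical
  set g0 : ℕ → ℕ := fun i => i + 2 with hg0
  set g1 : ℕ → ℕ := fun i => if i = 0 then 0 else i + 2 with hg1
  have hedge0 : cycEdge J 0 = {0, 1} := by
    simp only [cycEdge, Nat.zero_add]
    rw [Nat.mod_eq_of_lt (by omega)]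
  have hedge1 : cycEdge J 1 = {1, 2} := by
    simp only [cycEdge]
    rw [Nat.mod_eq_of_lt (by omega)]
  -- Step 1 : split the left-hand side
  have hsplitL : fJk J k x =
      (∑ A ∈ (edgeCollections J k).filter (fun A => 0 ∈ A),
        ∏ j ∈ Finset.range J \ cov J A, x j)
      + ∑ A ∈ (edgeCollections J k).filter (fun A => 1 ∈ A),
        ∏ j ∈ Finset.range J \ cov J A, x j := by
    rw [fJk_eq, Finset.sum_filter, Finset.sum_filter, ← Finset.sum_add_distrib]
    refine Finset.sum_congr rfl fun A hA => ?_
    obtain ⟨hsub, hcov, hcard⟩ := mem_EC.1 hA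
    have hdisj := (disj_of_card J (A := A) (by omega)).2
    by_cases h0 : 0 ∈ A
    · have h1 : 1 ∉ A := by
        intro h1
        have hd := hdisj 0 h0 1 h1 (by omega)
        rw [hedge0, hedge1] at hd
        exact absurd (Finset.disjoint_left.1 hd (by simp) : (1 : ℕ) ∉ _) (by simp)
      simp [h0, h1]
    · by_cases h1 : 1 ∈ A
      · simp [h0, h1]
      · have hcov1 : 1 ∉ cov J A := by
          intro hc
          obtain ⟨s, hs, hmem⟩ := Finset.mem_biUnion.1 hc
          have hsJ : s < J := Finset.mem_range.1 (hsub hs)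
          simp only [cycEdge, Finset.mem_insert, Finset.mem_singleton] at hmem
          rcases hmem with h | h
          · exact h1 (h ▸ hs)
          · rcases Nat.lt_or_ge (s + 1) J with hlt | hge
            · rw [Nat.mod_eq_of_lt hlt] at h
              have : s = 0 := by omega
              exact h0 (this ▸ hs)
            · have hsJ' : s + 1 = J := by omega
              rw [hsJ', Nat.mod_self] at h
              omega
        have : (∏ j ∈ Finset.range J \ cov J A, x j) = 0 := by
          refine Finset.prod_eq_zero (i := 1) ?_ hx1
          exact Finset.mem_sdiff.2 ⟨Finset.mem_range.2 (by omega), hcov1⟩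
        simp [h0, h1, this]
  -- Step 2 : split the right-hand side
  have hsplitR : fJk (J - 2) k (fun i => if i = 0 then x 0 + x 2 else x (i + 2)) =
      (∑ B ∈ (edgeCollections (J - 2) k).filter (fun B => J - 3 ∉ B),
        ∏ i ∈ Finset.range (J - 2) \ cov (J - 2) B, x (g0 i))
      + ∑ B ∈ (edgeCollections (J - 2) k).filter (fun B => 0 ∉ B),
        ∏ i ∈ Finset.range (J - 2) \ cov (J - 2) B, x (g1 i) := by
    rw [fJk_eq, Finset.sum_filter, Finset.sum_filter, ← Finset.sum_add_distrib]
    refine Finset.sum_congr rfl fun B hB => ?_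
    obtain ⟨hsub, hcov, hcard⟩ := mem_EC.1 hB
    have hdisj := (disj_of_card (J - 2) (A := B) (by omega)).2
    have hxg1 : ∀ i ∈ Finset.range (J - 2) \ cov (J - 2) B, i ≠ 0 →
        x (g1 i) = x (i + 2) := by
      intro i _ hi
      simp [hg1, hi]
    by_cases h0 : 0 ∈ B
    · have hJ5 : 3 ≤ J - 2 := by
        have : 1 ≤ B.card := Finset.card_pos.2 ⟨0, h0⟩
        omega
      have h1 : J - 3 ∉ B := by
        intro h1
        have hd := hdisj 0 h0 (J - 3) h1 (by omega)
        have hmem0 : (0 : ℕ) ∈ cycEdge (J - 2) (J - 3) := by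
          simp only [cycEdge, Finset.mem_insert, Finset.mem_singleton]
          right
          rw [show J - 3 + 1 = J - 2 by omega, Nat.mod_self]
        exact absurd (Finset.disjoint_left.1 hd (by simp [cycEdge]) : (0 : ℕ) ∉ _) (by simp [hmem0])
      have h0cov : (0 : ℕ) ∈ cov (J - 2) B :=
        Finset.mem_biUnion.2 ⟨0, h0, by simp [cycEdge]⟩
      rw [if_pos h1, if_neg (not_not_intro h0), add_zero]
      refine Finset.prod_congr rfl fun i hi => ?_
      have hi0 : i ≠ 0 := fun h => (Finset.mem_sdiff.1 hi).2 (h ▸ h0cov)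
      simp [hi0, hg0]
    · by_cases h1 : J - 3 ∈ B
      · have hJ5 : 3 ≤ J - 2 := by
          have : 1 ≤ B.card := Finset.card_pos.2 ⟨J - 3, h1⟩
          omega
        have h0cov : (0 : ℕ) ∈ cov (J - 2) B := by
          refine Finset.mem_biUnion.2 ⟨J - 3, h1, ?_⟩
          simp only [cycEdge, Finset.mem_insert, Finset.mem_singleton]
          right
          rw [show J - 3 + 1 = J - 2 by omega, Nat.mod_self]
        rw [if_neg (not_not_intro h1), if_pos h0, zero_add]
        refine Finset.prod_congr rfl fun i hi => ?_
        have hi0 : i ≠ 0 := fun h => (Finset.mem_sdiff.1 hi).2 (h ▸ h0cov)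
        simp [hi0, hg1]
      · have h0cov : (0 : ℕ) ∉ cov (J - 2) B := by
          intro hc
          obtain ⟨s, hs, hmem⟩ := Finset.mem_biUnion.1 hc
          have hsJ : s < J - 2 := Finset.mem_range.1 (hsub hs)
          simp only [cycEdge, Finset.mem_insert, Finset.mem_singleton] at hmem
          rcases hmem with h | h
          · exact h0 (h ▸ hs)
          · have hdvd : (J - 2) ∣ (s + 1) := Nat.dvd_of_mod_eq_zero h.symm
            have := Nat.le_of_dvd (by omega) hdvd
            have : s = J - 3 := by omega
            exact h1 (this ▸ hs)
        have h0U : (0 : ℕ) ∈ Finset.range (J - 2) \ cov (J - 2) B :=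
          Finset.mem_sdiff.2 ⟨Finset.mem_range.2 (by omega), h0cov⟩
        rw [if_pos h1, if_pos h0]
        rw [← Finset.mul_prod_erase _ _ h0U, ← Finset.mul_prod_erase _ _ h0U,
          ← Finset.mul_prod_erase _ _ h0U]
        have hP : ∀ f1 f2 : ℕ → ℝ, (∀ i ∈ (Finset.range (J - 2) \ cov (J - 2) B).erase 0,
            f1 i = f2 i) → ∏ i ∈ (Finset.range (J - 2) \ cov (J - 2) B).erase 0, f1 i
              = ∏ i ∈ (Finset.range (J - 2) \ cov (J - 2) B).erase 0, f2 i :=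
          fun f1 f2 h => Finset.prod_congr rfl h
        rw [hP (fun i => x (g0 i)) (fun i => x (i + 2)) (fun i _ => rfl),
          hP (fun i => x (g1 i)) (fun i => x (i + 2))
            (fun i hi => by simp [hg1, (Finset.mem_erase.1 hi).1]),
          hP (fun i => if i = 0 then x 0 + x 2 else x (i + 2)) (fun i => x (i + 2))
            (fun i hi => by simp [(Finset.mem_erase.1 hi).1])]
        simp only [hg0, hg1, if_true, eq_self_iff_true, ite_true]
        ring
  rw [hsplitL, hsplitR]
  congr 1
  · refine bij_aux J k 0 (J - 3) g0 hk hJ (by omega) (by simpa using hedge0)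
      (fun a b h => by simp only [hg0] at h; omega)
      (fun i hi => by refine ⟨?_, ?_, ?_⟩ <;> simp only [hg0] <;> omega)
      (fun j hj h1 h2 => ⟨j - 2, by omega, by simp only [hg0]; omega⟩)
      ?_ ?_ x
    · intro b hb hbd
      have h1 : (b + 1) % (J - 2) = b + 1 := Nat.mod_eq_of_lt (by omega)
      have h2 : (b + 2 + 1) % J = b + 3 := Nat.mod_eq_of_lt (by omega)
      simp only [cycEdge, h1, h2, Finset.image_insert, Finset.image_singleton, hg0,
        show b + 1 + 2 = b + 3 from by omega]
    · intro s hs hsc hd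
      have hs0 : s ∉ cycEdge J 0 := Finset.disjoint_left.1 hd (by simp [cycEdge])
      have hs1 : (s + 1) % J ∉ cycEdge J 0 := Finset.disjoint_left.1 hd (by simp [cycEdge])
      rw [hedge0] at hs0 hs1
      simp only [Finset.mem_insert, Finset.mem_singleton] at hs0 hs1
      push_neg at hs0 hs1
      have hslt : s + 1 < J := by
        by_contra hge
        have hEq : s + 1 = J := by omega
        rw [hEq, Nat.mod_self] at hs1
        exact hs1.1 rfl
      rw [Nat.mod_eq_of_lt hslt] at hs1
      exact ⟨by omega, by omega, by omega⟩
  · refine bij_aux J k 1 0 g1 hk hJ (by omega) (by simpa using hedge1)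
      (fun a b h => by simp only [hg1] at h; split_ifs at h <;> omega)
      (fun i hi => by refine ⟨?_, ?_, ?_⟩ <;> simp only [hg1] <;> split_ifs <;> omega)
      ?_ ?_ ?_ x
    · intro j hj h1 h2
      by_cases hj0 : j = 0
      · exact ⟨0, by omega, by simp [hg1, hj0]⟩
      · refine ⟨j - 2, by omega, ?_⟩
        simp only [hg1]
        rw [if_neg (by omega)]
        omega
    · intro b hb hbd
      by_cases hbl : b = J - 3
      · subst hbl
        have e2 : (J - 3 + 2 + 1) % J = 0 := by
          rw [show J - 3 + 2 + 1 = J by omega, Nat.mod_self]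
        have e3 : (J - 3 + 1) % (J - 2) = 0 := by
          rw [show J - 3 + 1 = J - 2 by omega, Nat.mod_self]
        simp only [cycEdge, e2, e3, Finset.image_insert, Finset.image_singleton, hg1]
        rw [if_neg hbd]
        simp
      · have h1 : (b + 1) % (J - 2) = b + 1 := Nat.mod_eq_of_lt (by omega)
        have h2 : (b + 2 + 1) % J = b + 3 := Nat.mod_eq_of_lt (by omega)
        simp only [cycEdge, h1, h2, Finset.image_insert, Finset.image_singleton, hg1]
        rw [if_neg hbd, if_neg (by omega)]
    · intro s hs hsc hd
      have hs0 : s ∉ cycEdge J 1 := Finset.disjoint_left.1 hd (by simp [cycEdge])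
      have hs1 : (s + 1) % J ∉ cycEdge J 1 := Finset.disjoint_left.1 hd (by simp [cycEdge])
      rw [hedge1] at hs0 hs1
      simp only [Finset.mem_insert, Finset.mem_singleton] at hs0 hs1
      push_neg at hs0 hs1
      have hsne0 : s ≠ 0 := by
        intro h
        subst h
        rw [Nat.mod_eq_of_lt (by omega)] at hs1
        exact hs1.1 rfl
      exact ⟨by omega, by omega, by omega⟩

end Skein

/-- Lemma A.1: for each `k ≥ 1`, the family `{f_{J,k}}` (with `f_{J,k} = 0` for `J < k`)
is a skein system of cyclically symmetric polynomials of parity `1` if `k` is odd and of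
parity `2` if `k` is even. -/
theorem fJk_isSkeinSystem (k : ℕ) (hk : 1 ≤ k) :
    IsSkeinSystem (if k % 2 = 1 then 1 else 2) (fun J => fJk J k) := by
  have hnu1 : 1 ≤ (if k % 2 = 1 then 1 else 2) := by split_ifs <;> omega
  refine ⟨?_, ?_, ?_, ?_⟩
  · intro J _ _ x y hxy
    exact Skein.prop0 J k x y hxy
  · intro J hJ _ x
    exact Skein.prop1 J k (le_trans hnu1 hJ) x
  · intro J hJ _ x
    exact Skein.prop2 J k (le_trans hnu1 hJ) x
  · intro J hJ _ x hx1
    exact Skein.prop3 J k hk (by omega) x hx1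
end

section
/- If J ≥ 2 is even, then a_J^+(x_1,…,x_J) = ∑_{k=2,4,…,J} (−4)^{k/2}·f_{J,k}(x_1,…,x_J) and a_J^−(x_1,…,x_J) = −4 − a_J^+(x_1,…,x_J). If J ≥ 1 is odd, then a_J^+(x_1,…,x_J) = 2 + ∑_{k=1,3,…,J} (−1)^{(k+1)/2}·2^k·f_{J,k}(x_1,…,x_J) and a_J^−(x_1,…,x_J) = 4 − a_J^+(x_1,…,x_J). (Proposition A.1) -/
/-- `a_J^+ = det A_J^+` if `J ≡ 0, 1 (mod 4)` and `a_J^+ = -det A_J^-` if `J ≡ 2, 3 (mod 4)`. -/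
noncomputable def aPlus (J : ℕ) (x : ℕ → ℝ) : ℝ :=
  if J % 4 = 0 ∨ J % 4 = 1 then (matA J 1 x).det else -(matA J (-1) x).det

/-- `a_J^- = -det A_J^-` if `J ≡ 0, 1 (mod 4)` and `a_J^- = det A_J^+` if `J ≡ 2, 3 (mod 4)`. -/
noncomputable def aMinus (J : ℕ) (x : ℕ → ℝ) : ℝ :=
  if J % 4 = 0 ∨ J % 4 = 1 then -(matA J (-1) x).det else (matA J 1 x).det

/-!
Write `d_j = -2 x_j`. Expanding along the last row shows that the determinant of the tridiagonal
matrix `T_n` with diagonal `d` satisfies the three-term recurrence of the matching polynomial of a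
path, so it equals `∑_M (-1)^{|M|} ∏_{j uncovered by M} d_j` over the matchings `M` of the path.
Multilinearity in the two corner rows gives
`det A_J^ε = det T_J - ε² det T_{J-2} + 2ε(-1)^{J+1}`, with `T_{J-2}` built on the vertices
`2, …, J-1`; splitting the matchings of the cycle by whether they use the edge `{J, 1}` identifies
`det T_J - det T_{J-2}` with the same signed sum over matchings of the cycle. Grouping those by
the number `k` of uncovered vertices turns it into `∑_k (-1)^{(J-k)/2} (-2)^k f_{J,k}`; the
constant `f_{J,0}` is read off at `x = 0`, and what remains is sign bookkeeping modulo 4.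
-/

open Finset Matrix

variable {R : Type*} [CommRing R]

namespace Matrix

theorem det_updateRow_single {n : ℕ} (A : Matrix (Fin (n + 1)) (Fin (n + 1)) R)
    (i j : Fin (n + 1)) :
    (A.updateRow i (Pi.single j 1)).det =
      (-1) ^ (i + j : ℕ) * (A.submatrix i.succAbove j.succAbove).det := by
  rw [← adjugate_apply, adjugate_fin_succ_eq_det_submatrix]

theorem det_updateCol_single {n : ℕ} (A : Matrix (Fin (n + 1)) (Fin (n + 1)) R)
    (i j : Fin (n + 1)) :
    (A.updateCol j (Pi.single i 1)).det =
      (-1) ^ (i + j : ℕ) * (A.submatrix i.succAbove j.succAbove).det := by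
  rw [← det_transpose, ← updateRow_transpose, det_updateRow_single,
    ← det_transpose (submatrix _ _ _), transpose_submatrix, transpose_transpose, add_comm]

theorem det_updateRow_add_smul_updateRow_add_smul {n : Type*} [Fintype n] [DecidableEq n]
    (M : Matrix n n R) {i j : n} (hij : i ≠ j) (a b : R) (u v : n → R) :
    ((M.updateRow i (M i + a • u)).updateRow j (M j + b • v)).det =
      M.det + a * (M.updateRow i u).det + b * (M.updateRow j v).det +
        a * b * ((M.updateRow i u).updateRow j v).det := by
  have hnoop {k l : n} (hkl : k ≠ l) (w : n → R) :
      (M.updateRow k w).updateRow l (M l) = M.updateRow k w := by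
    rw [← updateRow_ne (M := M) (b := w) hkl.symm, updateRow_eq_self]
  rw [det_updateRow_add, hnoop hij, det_updateRow_add, updateRow_eq_self, det_updateRow_smul,
    updateRow_comm _ hij, det_updateRow_add, hnoop hij.symm, det_updateRow_smul,
    det_updateRow_smul, updateRow_comm _ hij.symm, det_updateRow_smul]
  ring

end Matrix

theorem Fin.val_succAbove {n : ℕ} (p : Fin (n + 1)) (i : Fin n) :
    (p.succAbove i : ℕ) = if (i : ℕ) < p then (i : ℕ) else (i : ℕ) + 1 := by
  rcases lt_or_ge (i : ℕ) p with h | h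
  · rw [succAbove_of_castSucc_lt _ _ h, if_pos h, val_castSucc]
  · rw [succAbove_of_le_castSucc _ _ h, if_neg (not_lt.2 h), Fin.val_succ]

def tridiag (n : ℕ) (d : ℕ → R) : Matrix (Fin n) (Fin n) R :=
  Matrix.of fun i j =>
    if (i : ℕ) = j then d i else if (i : ℕ) + 1 = j ∨ (j : ℕ) + 1 = i then 1 else 0

theorem tridiag_transpose (n : ℕ) (d : ℕ → R) : (tridiag n d)ᵀ = tridiag n d := by
  ext i j
  simp only [tridiag, transpose_apply, of_apply]
  split_ifs <;> first | omega | simp_all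

theorem tridiag_submatrix_castSucc (n : ℕ) (d : ℕ → R) :
    (tridiag (n + 1) d).submatrix Fin.castSucc Fin.castSucc = tridiag n d := by
  ext i j
  simp [tridiag]

theorem det_tridiag_submatrix_succ_castSucc (n : ℕ) (d : ℕ → R) :
    ((tridiag (n + 1) d).submatrix Fin.succ Fin.castSucc).det = 1 := by
  rw [det_of_isUpperTriangular]
  · refine prod_eq_one fun i _ => ?_
    simp [tridiag]
  · intro i j hji
    have : (j : ℕ) < i := hji
    simp only [tridiag, submatrix_apply, of_apply, Fin.val_succ, Fin.val_castSucc]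
    split_ifs <;> first | rfl | omega

theorem det_tridiag_submatrix_castSucc_succ (n : ℕ) (d : ℕ → R) :
    ((tridiag (n + 1) d).submatrix Fin.castSucc Fin.succ).det = 1 := by
  rw [← tridiag_transpose, ← transpose_submatrix, det_transpose,
    det_tridiag_submatrix_succ_castSucc]

theorem det_tridiag_succ_succ (n : ℕ) (d : ℕ → R) :
    (tridiag (n + 2) d).det = d (n + 1) * (tridiag (n + 1) d).det - (tridiag n d).det := by
  set T := tridiag (n + 2) d
  set p : Fin (n + 2) := (Fin.last n).castSucc
  have hrow : T (Fin.last _) = d (n + 1) • Pi.single (Fin.last _) 1 + Pi.single p 1 := by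
    ext j
    simp only [T, p, tridiag, of_apply, Pi.add_apply, Pi.smul_apply, Pi.single_apply, Fin.ext_iff,
      Fin.val_last, Fin.val_castSucc, smul_eq_mul]
    split_ifs <;> first | omega | ring
  -- deleting the last row and column `n` leaves a minor whose last column is a unit vector
  set K := T.submatrix Fin.castSucc p.succAbove
  have hcol : K.updateCol (Fin.last _) (Pi.single (Fin.last _) 1) = K := by
    ext i j
    simp only [K, T, p, updateCol_apply, submatrix_apply, tridiag, of_apply, Pi.single_apply,
      Fin.ext_iff, Fin.val_last, Fin.val_castSucc, Fin.val_succAbove]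
    split_ifs <;> first | rfl | omega
  have hK : K.det = (tridiag n d).det := by
    rw [← hcol, det_updateCol_single, Fin.val_last, Even.neg_one_pow ⟨n, rfl⟩, one_mul]
    congr 1
    ext i j
    simp only [K, T, p, submatrix_apply, tridiag, of_apply, Fin.val_succAbove, Fin.succAbove_last,
      Fin.val_castSucc, Fin.val_last]
    split_ifs <;> first | rfl | omega
  rw [← updateRow_eq_self T (Fin.last _), hrow, det_updateRow_add, det_updateRow_smul,
    det_updateRow_single, det_updateRow_single, Fin.succAbove_last, tridiag_submatrix_castSucc, hK]
  simp only [p, Fin.val_last, Fin.val_castSucc]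
  rw [Even.neg_one_pow ⟨n + 1, rfl⟩, Odd.neg_one_pow ⟨n, by ring⟩]
  ring

theorem det_tridiag_updateRow_zero_single_last (m : ℕ) (d : ℕ → R) :
    ((tridiag (m + 2) d).updateRow 0 (Pi.single (Fin.last _) 1)).det = (-1) ^ (m + 1) := by
  rw [det_updateRow_single, Fin.succAbove_zero, Fin.succAbove_last,
    det_tridiag_submatrix_succ_castSucc, Fin.val_zero, Fin.val_last, zero_add, mul_one]

theorem det_tridiag_updateRow_last_single_zero (m : ℕ) (d : ℕ → R) :
    ((tridiag (m + 2) d).updateRow (Fin.last _) (Pi.single 0 1)).det = (-1) ^ (m + 1) := by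
  rw [det_updateRow_single, Fin.succAbove_zero, Fin.succAbove_last,
    det_tridiag_submatrix_castSucc_succ, Fin.val_zero, Fin.val_last, add_zero, mul_one]

theorem det_tridiag_updateRow_corners (m : ℕ) (d : ℕ → R) :
    (((tridiag (m + 2) d).updateRow 0 (Pi.single (Fin.last _) 1)).updateRow (Fin.last _)
      (Pi.single 0 1)).det = -(tridiag m (fun i => d (i + 1))).det := by
  set T := tridiag (m + 2) d
  have hminor : (T.updateRow (Fin.last _) (Pi.single 0 1)).submatrix Fin.succ Fin.castSucc =
      (T.submatrix Fin.succ Fin.castSucc).updateRow (Fin.last _) (Pi.single 0 1) := by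
    ext i j
    simp only [submatrix_apply, updateRow_apply, Pi.single_apply, Fin.ext_iff, Fin.val_succ,
      Fin.val_castSucc, Fin.val_last, Fin.val_zero]
    split_ifs <;> first | rfl | omega
  have hinner : (T.submatrix Fin.succ Fin.castSucc).submatrix Fin.castSucc Fin.succ =
      tridiag m (fun i => d (i + 1)) := by
    ext i j
    simp [T, tridiag]
  rw [updateRow_comm _ (Fin.last_pos.ne : (0 : Fin (m + 2)) ≠ Fin.last _),
    det_updateRow_single, Fin.succAbove_zero, Fin.succAbove_last, hminor, det_updateRow_single,
    Fin.succAbove_zero, Fin.succAbove_last, hinner, Fin.val_zero, Fin.val_last, Fin.val_last,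
    zero_add, Fin.val_zero, add_zero, pow_succ]
  linear_combination (-(tridiag m (fun i => d (i + 1))).det) *
    (Even.neg_one_pow ⟨m, rfl⟩ : ((-1 : R) ^ (m + m) = 1))

theorem matA_eq_updateRow_updateRow (m : ℕ) (ε : ℝ) (x : ℕ → ℝ) :
    matA (m + 2) ε x =
      let T := tridiag (m + 2) (fun j => -2 * x j)
      (T.updateRow 0 (T 0 + ε • Pi.single (Fin.last _) 1)).updateRow (Fin.last _)
        (T (Fin.last _) + ε • Pi.single 0 1) := by
  ext ⟨i, hi⟩ ⟨j, hj⟩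
  simp only [matA, tridiag, of_apply, updateRow_apply, Pi.add_apply, Pi.smul_apply, Pi.single_apply,
    Fin.ext_iff, Fin.val_zero, Fin.val_last, smul_eq_mul]
  split_ifs <;> subst_vars <;> first | omega | ring1 | (simp only [or_false] at *; omega)

theorem det_matA_add_two (m : ℕ) (ε : ℝ) (x : ℕ → ℝ) :
    (matA (m + 2) ε x).det = (tridiag (m + 2) (fun j => -2 * x j)).det
      - ε ^ 2 * (tridiag m (fun j => -2 * x (j + 1))).det + 2 * ε * (-1) ^ (m + 1) := by
  rw [matA_eq_updateRow_updateRow, det_updateRow_add_smul_updateRow_add_smul _ Fin.last_pos.ne,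
    det_tridiag_updateRow_zero_single_last, det_tridiag_updateRow_last_single_zero,
    det_tridiag_updateRow_corners]
  ring

-- matchings of the path `a — a+1 — ⋯ — a+n-1`, each edge `{s, s+1}` recorded by `s`
def pathMatchings (a n : ℕ) : Finset (Finset ℕ) :=
  (Ico a (a + n - 1)).powerset.filter fun A => ∀ s ∈ A, s + 1 ∉ A

def pathCover (A : Finset ℕ) : Finset ℕ := A.biUnion fun s => {s, s + 1}

def pathMatchingSum (a n : ℕ) (d : ℕ → R) : R :=
  ∑ A ∈ pathMatchings a n, (-1) ^ #A * ∏ j ∈ Ico a (a + n) \ pathCover A, d j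

theorem mem_pathMatchings {a n : ℕ} {A : Finset ℕ} :
    A ∈ pathMatchings a n ↔
      (∀ s ∈ A, a ≤ s ∧ s + 1 < a + n) ∧ ∀ s ∈ A, s + 1 ∉ A := by
  simp only [pathMatchings, mem_filter, mem_powerset, subset_iff, mem_Ico]
  refine and_congr (forall₂_congr fun s _ => ?_) Iff.rfl
  omega

theorem mem_pathCover {A : Finset ℕ} {j : ℕ} :
    j ∈ pathCover A ↔ ∃ s ∈ A, j = s ∨ j = s + 1 := by
  simp [pathCover]

theorem pathCover_insert (s : ℕ) (A : Finset ℕ) :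
    pathCover (insert s A) = {s, s + 1} ∪ pathCover A := by
  rw [pathCover, biUnion_insert, pathCover]

theorem pathCover_subset_Ico {a n : ℕ} {A : Finset ℕ} (hA : A ∈ pathMatchings a n) :
    pathCover A ⊆ Ico a (a + n) := by
  intro j hj
  obtain ⟨s, hs, hjs⟩ := mem_pathCover.1 hj
  have := (mem_pathMatchings.1 hA).1 s hs
  rw [mem_Ico]
  omega

theorem pathMatchings_of_le_one {a n : ℕ} (hn : n ≤ 1) : pathMatchings a n = {∅} := by
  rw [pathMatchings, Ico_eq_empty (by omega), powerset_empty, filter_singleton]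
  simp

theorem pathMatchingSum_zero (a : ℕ) (d : ℕ → R) : pathMatchingSum a 0 d = 1 := by
  simp [pathMatchingSum, pathMatchings_of_le_one zero_le_one]

theorem pathMatchingSum_one (a : ℕ) (d : ℕ → R) : pathMatchingSum a 1 d = d a := by
  simp [pathMatchingSum, pathMatchings_of_le_one le_rfl, pathCover]

theorem pathMatchings_filter_notMem (a n : ℕ) :
    (pathMatchings a (n + 2)).filter (fun A => a + n ∉ A) = pathMatchings a (n + 1) := by
  ext A
  simp only [mem_filter, mem_pathMatchings]
  constructor
  · rintro ⟨⟨hA, hadj⟩, hn⟩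
    refine ⟨fun s hs => ?_, hadj⟩
    have : s ≠ a + n := fun h => hn (h ▸ hs)
    have := hA s hs
    omega
  · rintro ⟨hA, hadj⟩
    exact ⟨⟨fun s hs => by have := hA s hs; omega, hadj⟩, fun h => by have := hA _ h; omega⟩

theorem add_notMem_pathMatchings {a n : ℕ} {B : Finset ℕ} (hB : B ∈ pathMatchings a n) :
    a + n ∉ B := fun h => by
  have := (mem_pathMatchings.1 hB).1 _ h
  omega

theorem insert_mem_pathMatchings {a n : ℕ} {B : Finset ℕ} (hB : B ∈ pathMatchings a n) :
    insert (a + n) B ∈ pathMatchings a (n + 2) := by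
  obtain ⟨hB, hadj⟩ := mem_pathMatchings.1 hB
  refine mem_pathMatchings.2 ⟨fun s hs => ?_, fun s hs hs' => ?_⟩
  · rcases mem_insert.1 hs with rfl | hs
    · omega
    · have := hB s hs; omega
  · rcases mem_insert.1 hs with rfl | hs <;> rcases mem_insert.1 hs' with h | h
    · omega
    · have := hB _ h; omega
    · have := hB s hs; omega
    · exact hadj s hs h

theorem erase_mem_pathMatchings {a n : ℕ} {A : Finset ℕ} (hA : A ∈ pathMatchings a (n + 2))
    (hn : a + n ∈ A) : A.erase (a + n) ∈ pathMatchings a n := by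
  obtain ⟨hA, hadj⟩ := mem_pathMatchings.1 hA
  refine mem_pathMatchings.2 ⟨fun s hs => ?_, fun s hs hs' => ?_⟩
  · obtain ⟨hne, hs⟩ := mem_erase.1 hs
    have : s + 1 ≠ a + n := fun h => hadj s hs (h ▸ hn)
    have := hA s hs
    omega
  · exact hadj s (mem_of_mem_erase hs) (mem_of_mem_erase hs')

theorem pathMatchingSum_add_two (a n : ℕ) (d : ℕ → R) :
    pathMatchingSum a (n + 2) d =
      d (a + n + 1) * pathMatchingSum a (n + 1) d - pathMatchingSum a n d := by
  rw [pathMatchingSum, ← sum_filter_not_add_sum_filter _ (fun A => a + n ∈ A), sub_eq_add_neg,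
    pathMatchings_filter_notMem]
  congr 1
  · rw [pathMatchingSum, mul_sum]
    refine sum_congr rfl fun A hA => ?_
    have hlast : a + n + 1 ∉ pathCover A := fun h => by
      have := mem_Ico.1 (pathCover_subset_Ico hA h); omega
    rw [show a + (n + 2) = a + n + 1 + 1 by ring, Nat.Ico_succ_right_eq_insert_Ico (by omega),
      insert_sdiff_of_notMem _ hlast, prod_insert (by simp), mul_left_comm, add_assoc]
  · rw [pathMatchingSum, ← sum_neg_distrib]
    symm
    refine sum_nbij' (insert (a + n)) (fun A => A.erase (a + n))
      (fun B hB => mem_filter.2 ⟨insert_mem_pathMatchings hB, mem_insert_self _ _⟩)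
      (fun A hA => erase_mem_pathMatchings (mem_filter.1 hA).1 (mem_filter.1 hA).2)
      (fun B hB => erase_insert (add_notMem_pathMatchings hB))
      (fun A hA => insert_erase (mem_filter.1 hA).2) fun B hB => ?_
    have hrest : Ico a (a + (n + 2)) \ pathCover (insert (a + n) B) =
        Ico a (a + n) \ pathCover B := by
      ext j
      simp only [mem_sdiff, mem_Ico, pathCover_insert, mem_union, mem_insert, mem_singleton]
      by_cases h : j ∈ pathCover B
      · simp [h]
      · simp only [h, or_false, not_false_eq_true, and_true]
        omega
    rw [hrest, card_insert_of_notMem (add_notMem_pathMatchings hB), pow_succ]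
    ring

theorem det_tridiag_eq_pathMatchingSum (a n : ℕ) (d : ℕ → R) :
    (tridiag n (fun i => d (a + i))).det = pathMatchingSum a n d := by
  induction n using Nat.twoStepInduction with
  | zero => rw [det_isEmpty, pathMatchingSum_zero]
  | one => simp [det_unique, tridiag, pathMatchingSum_one]
  | more n ih₀ ih₁ =>
    rw [det_tridiag_succ_succ, ih₀, ih₁, pathMatchingSum_add_two, add_assoc]

def cycleMatchings (J : ℕ) : Finset (Finset ℕ) :=
  (range J).powerset.filter fun A => ∀ s ∈ A, (s + 1) % J ∉ A

def cycleMatchingSum (J : ℕ) (d : ℕ → R) : R :=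
  ∑ A ∈ cycleMatchings J, (-1) ^ #A * ∏ j ∈ range J \ A.biUnion (fun s => cycEdge J s), d j

theorem mem_cycleMatchings {J : ℕ} {A : Finset ℕ} :
    A ∈ cycleMatchings J ↔ (∀ s ∈ A, s < J) ∧ ∀ s ∈ A, (s + 1) % J ∉ A := by
  simp [cycleMatchings, subset_iff]

theorem cycEdge_of_lt {J s : ℕ} (h : s + 1 < J) : cycEdge J s = {s, s + 1} := by
  rw [cycEdge, Nat.mod_eq_of_lt h]

theorem biUnion_cycEdge_eq_pathCover {J : ℕ} {A : Finset ℕ} (h : ∀ s ∈ A, s + 1 < J) :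
    A.biUnion (fun s => cycEdge J s) = pathCover A :=
  biUnion_congr rfl fun s hs => cycEdge_of_lt (h s hs)

theorem cycleMatchings_filter_notMem (m : ℕ) :
    (cycleMatchings (m + 2)).filter (fun A => m + 1 ∉ A) = pathMatchings 0 (m + 2) := by
  ext A
  simp only [mem_filter, mem_cycleMatchings, mem_pathMatchings, zero_le, true_and, zero_add]
  constructor
  · rintro ⟨⟨hA, hadj⟩, hm⟩
    have hA' (s) (hs : s ∈ A) : s + 1 < m + 2 := by
      have : s ≠ m + 1 := fun h => hm (h ▸ hs)
      have := hA s hs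
      omega
    exact ⟨hA', fun s hs => Nat.mod_eq_of_lt (hA' s hs) ▸ hadj s hs⟩
  · rintro ⟨hA, hadj⟩
    refine ⟨⟨fun s hs => by have := hA s hs; omega,
      fun s hs => (Nat.mod_eq_of_lt (hA s hs)).symm ▸ hadj s hs⟩, fun h => ?_⟩
    have := hA _ h
    omega

theorem insert_mem_cycleMatchings {m : ℕ} {B : Finset ℕ} (hB : B ∈ pathMatchings 1 m) :
    insert (m + 1) B ∈ cycleMatchings (m + 2) := by
  obtain ⟨hB, hadj⟩ := mem_pathMatchings.1 hB
  refine mem_cycleMatchings.2 ⟨fun s hs => ?_, fun s hs hs' => ?_⟩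
  · rcases mem_insert.1 hs with rfl | hs
    · omega
    · have := hB s hs; omega
  · rcases mem_insert.1 hs with rfl | hs
    · rw [Nat.mod_self] at hs'
      rcases mem_insert.1 hs' with h | h
      · omega
      · have := hB _ h; omega
    · have := hB s hs
      rw [Nat.mod_eq_of_lt (by omega)] at hs'
      rcases mem_insert.1 hs' with h | h
      · omega
      · exact hadj s hs h

theorem erase_mem_pathMatchings_of_mem_cycleMatchings {m : ℕ} {A : Finset ℕ}
    (hA : A ∈ cycleMatchings (m + 2)) (hm : m + 1 ∈ A) :
    A.erase (m + 1) ∈ pathMatchings 1 m := by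
  obtain ⟨hA, hadj⟩ := mem_cycleMatchings.1 hA
  refine mem_pathMatchings.2 ⟨fun s hs => ?_, fun s hs hs' => ?_⟩
  · obtain ⟨hne, hsA⟩ := mem_erase.1 hs
    -- the wrap-around edge `{m+1, 0}` blocks both `0` and `m`
    have h0 : s ≠ 0 := by
      rintro rfl
      exact hadj _ hm (by rwa [Nat.mod_self])
    have hm' : s ≠ m := by
      rintro rfl
      exact hadj s hsA (by rw [Nat.mod_eq_of_lt (by omega)]; exact hm)
    have := hA s hsA
    omega
  · obtain ⟨hne, hs'⟩ := mem_erase.1 hs'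
    have := hA _ hs'
    exact hadj s (mem_of_mem_erase hs) (by rwa [Nat.mod_eq_of_lt (by omega)])

theorem cycleMatchingSum_eq_sub (m : ℕ) (d : ℕ → R) :
    cycleMatchingSum (m + 2) d = pathMatchingSum 0 (m + 2) d - pathMatchingSum 1 m d := by
  rw [cycleMatchingSum, ← sum_filter_not_add_sum_filter _ (fun A => m + 1 ∈ A), sub_eq_add_neg,
    cycleMatchings_filter_notMem]
  congr 1
  · refine sum_congr rfl fun A hA => ?_
    rw [biUnion_cycEdge_eq_pathCover fun s hs => by have := (mem_pathMatchings.1 hA).1 s hs; omega,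
      zero_add, range_eq_Ico]
  · rw [pathMatchingSum, ← sum_neg_distrib]
    symm
    refine sum_nbij' (insert (m + 1)) (fun A => A.erase (m + 1))
      (fun B hB => mem_filter.2 ⟨insert_mem_cycleMatchings hB, mem_insert_self _ _⟩)
      (fun A hA => erase_mem_pathMatchings_of_mem_cycleMatchings (mem_filter.1 hA).1
        (mem_filter.1 hA).2)
      (fun B hB => erase_insert fun h => by have := (mem_pathMatchings.1 hB).1 _ h; omega)
      (fun A hA => insert_erase (mem_filter.1 hA).2) fun B hB => ?_
    have hB' := (mem_pathMatchings.1 hB).1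
    have hm : m + 1 ∉ B := fun h => by have := hB' _ h; omega
    have hrest : range (m + 2) \ (insert (m + 1) B).biUnion (fun s => cycEdge (m + 2) s) =
        Ico 1 (1 + m) \ pathCover B := by
      rw [biUnion_insert, biUnion_cycEdge_eq_pathCover fun s hs => by have := hB' s hs; omega,
        cycEdge, Nat.mod_self]
      ext j
      simp only [mem_sdiff, mem_range, mem_Ico, mem_union, mem_insert, mem_singleton]
      by_cases h : j ∈ pathCover B
      · simp [h]
      · simp only [h, or_false, not_false_eq_true, and_true]
        omega
    rw [hrest, card_insert_of_notMem hm, pow_succ]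
    ring

theorem cycleMatchingSum_one (d : ℕ → R) : cycleMatchingSum 1 d = d 0 := by
  have : cycleMatchings 1 = {∅} := by decide
  simp [cycleMatchingSum, this]

theorem det_matA {J : ℕ} (hJ : 1 ≤ J) {ε : ℝ} (hε : ε ^ 2 = 1) (x : ℕ → ℝ) :
    (matA J ε x).det = cycleMatchingSum J (fun j => -2 * x j) + 2 * ε * (-1) ^ (J + 1) := by
  match J, hJ with
  | 1, _ =>
    rw [det_unique, cycleMatchingSum_one]
    simp [matA, add_assoc, ← two_mul]
  | m + 2, _ =>
    have h₀ := det_tridiag_eq_pathMatchingSum 0 (m + 2) (fun j => -2 * x j)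
    have h₁ := det_tridiag_eq_pathMatchingSum 1 m (fun j => -2 * x j)
    simp only [zero_add, add_comm 1] at h₀ h₁
    rw [det_matA_add_two, cycleMatchingSum_eq_sub, hε, h₀, h₁]
    ring

section EdgeCollections

variable {J : ℕ} {A : Finset ℕ}

theorem biUnion_cycEdge_subset_range (hA : ∀ s ∈ A, s < J) :
    A.biUnion (fun s => cycEdge J s) ⊆ range J := by
  intro j hj
  obtain ⟨s, hs, hj⟩ := mem_biUnion.1 hj
  have := hA s hs
  rcases mem_insert.1 hj with rfl | hj
  · exact mem_range.2 this
  · exact mem_range.2 (mem_singleton.1 hj ▸ Nat.mod_lt _ (by omega))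

theorem card_biUnion_cycEdge (hA : A ∈ cycleMatchings J) :
    #(A.biUnion fun s => cycEdge J s) = 2 * #A := by
  obtain ⟨hlt, hadj⟩ := mem_cycleMatchings.1 hA
  have hdisj : (A : Set ℕ).PairwiseDisjoint fun s => cycEdge J s := by
    intro s hs t ht hst
    refine disjoint_left.2 fun j hjs hjt => ?_
    simp only [cycEdge, mem_insert, mem_singleton] at hjs hjt
    rcases hjs with rfl | rfl <;> rcases hjt with h | h
    · exact hst h
    · exact hadj t ht (h ▸ hs)
    · exact hadj s hs (h ▸ ht)
    · have := (Nat.ModEq.add_right_cancel' 1 h : s ≡ t [MOD J])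
      rw [Nat.ModEq, Nat.mod_eq_of_lt (hlt s hs), Nat.mod_eq_of_lt (hlt t ht)] at this
      exact hst this
  have hcard (s) (hs : s ∈ A) : #(cycEdge J s) = 2 :=
    card_pair_eq_two_iff.2 fun h => hadj s hs (by rw [← h]; exact hs)
  rw [card_biUnion hdisj, sum_congr rfl hcard, sum_const, smul_eq_mul, mul_comm]

theorem mem_cycleMatchings_of_card_biUnion_cycEdge (hA : ∀ s ∈ A, s < J)
    (hcard : #(A.biUnion fun s => cycEdge J s) = 2 * #A) : A ∈ cycleMatchings J := by
  refine mem_cycleMatchings.2 ⟨hA, fun s hs ht => ?_⟩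
  obtain ⟨t, hts⟩ : ∃ t, (s + 1) % J = t := ⟨_, rfl⟩
  rw [hts] at ht
  -- beyond the other edges, the edge at `t` only covers `(t + 1) % J`, so the cover is too small
  have hsub : A.biUnion (fun s => cycEdge J s) ⊆
      insert ((t + 1) % J) ((A.erase t).biUnion fun s => cycEdge J s) := by
    intro j hj
    obtain ⟨u, hu, hj⟩ := mem_biUnion.1 hj
    by_cases hut : u = t
    · subst hut
      rcases mem_insert.1 hj with rfl | hj
      · by_cases hst : s = j
        · subst hst
          exact mem_insert.2 (.inl hts.symm)
        · refine mem_insert_of_mem (mem_biUnion.2 ⟨s, mem_erase.2 ⟨hst, hs⟩, ?_⟩)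
          simp [cycEdge, hts]
      · exact mem_insert.2 (.inl (mem_singleton.1 hj))
    · exact mem_insert_of_mem (mem_biUnion.2 ⟨u, mem_erase.2 ⟨hut, hu⟩, hj⟩)
  have h₁ := (card_le_card hsub).trans (card_insert_le _ _)
  have h₂ := card_biUnion_le_card_mul (A.erase t) (fun s => cycEdge J s) 2 fun _ _ => card_le_two
  have h₃ := card_erase_of_mem ht
  have h₄ : 0 < #A := card_pos.2 ⟨s, hs⟩
  omega

theorem mem_edgeCollections {k : ℕ} :
    A ∈ edgeCollections J k ↔ A ∈ cycleMatchings J ∧ 2 * #A + k = J := by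
  have hsub : A ⊆ range J ↔ ∀ s ∈ A, s < J := by simp [subset_iff]
  rw [edgeCollections, mem_filter, mem_powerset, hsub]
  constructor
  · rintro ⟨hA, hcov, hk⟩
    exact ⟨mem_cycleMatchings_of_card_biUnion_cycEdge hA (by omega), hk⟩
  · rintro ⟨hA, hk⟩
    exact ⟨(mem_cycleMatchings.1 hA).1, by rw [card_biUnion_cycEdge hA]; omega, hk⟩

theorem two_mul_card_le_of_mem_cycleMatchings (hA : A ∈ cycleMatchings J) : 2 * #A ≤ J := by
  have := card_le_card (biUnion_cycEdge_subset_range (mem_cycleMatchings.1 hA).1)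
  rwa [card_biUnion_cycEdge hA, card_range] at this

theorem card_range_sdiff_biUnion_cycEdge {k : ℕ} (hA : A ∈ edgeCollections J k) :
    #(range J \ A.biUnion fun s => cycEdge J s) = k := by
  obtain ⟨hA, hk⟩ := mem_edgeCollections.1 hA
  rw [card_sdiff_of_subset (biUnion_cycEdge_subset_range (mem_cycleMatchings.1 hA).1),
    card_biUnion_cycEdge hA, card_range]
  omega

theorem cycleMatchingSum_mul (J : ℕ) (c : ℝ) (x : ℕ → ℝ) :
    cycleMatchingSum J (fun j => c * x j) =
      ∑ k ∈ range (J + 1), (-1) ^ ((J - k) / 2) * c ^ k * fJk J k x := by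
  rw [cycleMatchingSum, ← sum_fiberwise_of_maps_to (g := fun A => J - 2 * #A) (t := range (J + 1))
    fun A _ => mem_range.2 (by omega)]
  refine sum_congr rfl fun k _ => ?_
  have hfiber : (cycleMatchings J).filter (fun A => J - 2 * #A = k) = edgeCollections J k := by
    ext A
    rw [mem_filter, mem_edgeCollections]
    exact and_congr_right fun hA => by have := two_mul_card_le_of_mem_cycleMatchings hA; omega
  rw [hfiber, fJk, mul_sum]
  refine sum_congr rfl fun A hA => ?_
  have hcard : #A = (J - k) / 2 := by have := (mem_edgeCollections.1 hA).2; omega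
  rw [prod_mul_distrib, prod_const, card_range_sdiff_biUnion_cycEdge hA, hcard]
  ring

end EdgeCollections

theorem fJk_eq_zero_of_mod_two_ne {J k : ℕ} (h : k % 2 ≠ J % 2) (x : ℕ → ℝ) :
    fJk J k x = 0 :=
  sum_eq_zero fun A hA => by have := (mem_edgeCollections.1 hA).2; omega

theorem fJk_zero_eq_card (J : ℕ) (x : ℕ → ℝ) : fJk J 0 x = #(edgeCollections J 0) := by
  rw [fJk, card_eq_sum_ones, Nat.cast_sum]
  refine sum_congr rfl fun A hA => ?_
  rw [card_eq_zero.1 (card_range_sdiff_biUnion_cycEdge hA), prod_empty, Nat.cast_one]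

theorem fJk_eq_zero_at_zero {J k : ℕ} (hk : k ≠ 0) : fJk J k 0 = 0 := by
  refine sum_eq_zero fun A hA => prod_eq_zero_iff.2 ?_
  obtain ⟨j, hj⟩ :=
    card_pos.1 ((card_range_sdiff_biUnion_cycEdge hA).symm ▸ Nat.pos_of_ne_zero hk)
  exact ⟨j, hj, rfl⟩

theorem pathMatchingSum_two_mul_at_zero (a q : ℕ) :
    pathMatchingSum a (2 * q) (fun _ => (0 : R)) = (-1) ^ q := by
  induction q with
  | zero => rw [mul_zero, pow_zero, pathMatchingSum_zero]
  | succ q ih => rw [Nat.mul_succ, pathMatchingSum_add_two, ih, pow_succ]; ring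

theorem fJk_zero_eq_two {J : ℕ} (hJ : 2 ≤ J) (he : J % 2 = 0) (x : ℕ → ℝ) :
    fJk J 0 x = 2 := by
  obtain ⟨q, rfl⟩ : ∃ q, J = 2 * q + 2 := ⟨J / 2 - 1, by omega⟩
  -- `f_{J,0}` is the constant term of the cycle matching sum, which is read off at `x = 0`
  have hzero :
      cycleMatchingSum (2 * q + 2) (fun j => 1 * (0 : ℕ → ℝ) j) = 2 * (-1) ^ (q + 1) := by
    simp only [Pi.zero_apply, mul_zero]
    rw [cycleMatchingSum_eq_sub, show 2 * q + 2 = 2 * (q + 1) by ring,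
      pathMatchingSum_two_mul_at_zero, pathMatchingSum_two_mul_at_zero, pow_succ]
    ring
  rw [cycleMatchingSum_mul, sum_eq_single 0 (fun k _ hk => by rw [fJk_eq_zero_at_zero hk, mul_zero])
    (by simp), show (2 * q + 2 - 0) / 2 = q + 1 by omega, pow_zero, mul_one] at hzero
  rw [fJk_zero_eq_card, ← fJk_zero_eq_card _ 0]
  exact mul_left_cancel₀ (pow_ne_zero _ (by norm_num)) (hzero.trans (mul_comm _ _))

theorem neg_one_pow_div_two_eq_ite (J : ℕ) :
    (-1 : ℝ) ^ (J / 2) = if J % 4 = 0 ∨ J % 4 = 1 then 1 else -1 := by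
  split_ifs with h
  · exact Even.neg_one_pow ⟨J / 4, by omega⟩
  · exact Odd.neg_one_pow ⟨J / 4, by omega⟩

theorem aPlus_eq {J : ℕ} (hJ : 1 ≤ J) (x : ℕ → ℝ) :
    aPlus J x = (-1) ^ (J / 2) * cycleMatchingSum J (fun j => -2 * x j) + 2 * (-1) ^ (J + 1) := by
  rw [aPlus, det_matA hJ (one_pow 2), det_matA hJ (neg_one_sq), neg_one_pow_div_two_eq_ite]
  split_ifs <;> ring

theorem aMinus_eq {J : ℕ} (hJ : 1 ≤ J) (x : ℕ → ℝ) :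
    aMinus J x =
      -((-1) ^ (J / 2) * cycleMatchingSum J (fun j => -2 * x j)) + 2 * (-1) ^ (J + 1) := by
  rw [aMinus, det_matA hJ (one_pow 2), det_matA hJ (neg_one_sq), neg_one_pow_div_two_eq_ite]
  split_ifs <;> ring

theorem neg_one_pow_mul_cycleMatchingSum_of_even {J : ℕ} (hJ : 2 ≤ J) (he : J % 2 = 0)
    (x : ℕ → ℝ) :
    (-1) ^ (J / 2) * cycleMatchingSum J (fun j => -2 * x j) =
      2 + ∑ k ∈ (range (J + 1)).filter (fun k => 2 ≤ k ∧ k % 2 = 0),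
        (-4 : ℝ) ^ (k / 2) * fJk J k x := by
  rw [cycleMatchingSum_mul, mul_sum,
    ← sum_filter_not_add_sum_filter _ (fun k => 2 ≤ k ∧ k % 2 = 0)]
  congr 1
  · rw [sum_eq_single_of_mem 0 (mem_filter.2 ⟨mem_range.2 (by omega), by omega⟩)
      fun k hk hk0 => ?_]
    · rw [fJk_zero_eq_two hJ he, Nat.sub_zero, pow_zero, mul_one, ← mul_assoc, ← pow_add,
        Even.neg_one_pow ⟨_, rfl⟩, one_mul]
    · have := (mem_filter.1 hk).2
      rw [fJk_eq_zero_of_mod_two_ne (by omega), mul_zero, mul_zero]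
  · refine sum_congr rfl fun k hk => ?_
    obtain ⟨hkJ, -, hk2⟩ := mem_filter.1 hk
    rw [mem_range] at hkJ
    obtain ⟨q, rfl⟩ : ∃ q, k = 2 * q := ⟨k / 2, by omega⟩
    obtain ⟨r, rfl⟩ : ∃ r, J = 2 * q + 2 * r := ⟨J / 2 - q, by omega⟩
    rw [show (2 * q + 2 * r) / 2 = q + r by omega, show (2 * q + 2 * r - 2 * q) / 2 = r by omega,
      show 2 * q / 2 = q by omega, pow_mul, show (-2 : ℝ) ^ 2 = 4 by norm_num, neg_pow (4 : ℝ)]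
    linear_combination (-1 : ℝ) ^ q * 4 ^ q * fJk (2 * q + 2 * r) (2 * q) x *
      (Even.neg_one_pow ⟨r, rfl⟩ : (-1 : ℝ) ^ (r + r) = 1)

theorem neg_one_pow_mul_cycleMatchingSum_of_odd {J : ℕ} (ho : J % 2 = 1) (x : ℕ → ℝ) :
    (-1) ^ (J / 2) * cycleMatchingSum J (fun j => -2 * x j) =
      ∑ k ∈ (range (J + 1)).filter (fun k => 1 ≤ k ∧ k % 2 = 1),
        (-1 : ℝ) ^ ((k + 1) / 2) * 2 ^ k * fJk J k x := by
  rw [cycleMatchingSum_mul, mul_sum,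
    ← sum_filter_not_add_sum_filter _ (fun k => 1 ≤ k ∧ k % 2 = 1),
    sum_eq_zero fun k hk => ?_, zero_add]
  · refine sum_congr rfl fun k hk => ?_
    obtain ⟨hkJ, -, hk2⟩ := mem_filter.1 hk
    rw [mem_range] at hkJ
    obtain ⟨q, rfl⟩ : ∃ q, k = 2 * q + 1 := ⟨k / 2, by omega⟩
    obtain ⟨r, rfl⟩ : ∃ r, J = 2 * q + 1 + 2 * r := ⟨J / 2 - q, by omega⟩
    rw [show (2 * q + 1 + 2 * r) / 2 = q + r by omega,
      show (2 * q + 1 + 2 * r - (2 * q + 1)) / 2 = r by omega,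
      show (2 * q + 1 + 1) / 2 = q + 1 by omega, neg_pow (2 : ℝ), Odd.neg_one_pow ⟨q, rfl⟩]
    linear_combination
      (-1 : ℝ) ^ (q + 1) * 2 ^ (2 * q + 1) * fJk (2 * q + 1 + 2 * r) (2 * q + 1) x *
        (Even.neg_one_pow ⟨r, rfl⟩ : (-1 : ℝ) ^ (r + r) = 1)
  · have := (mem_filter.1 hk).2
    rw [fJk_eq_zero_of_mod_two_ne (by omega), mul_zero, mul_zero]

/-- Proposition A.1: explicit expansion of `a_J^±` in the polynomials `f_{J,k}`. -/
theorem aPlus_aMinus_expansion :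
    (∀ J : ℕ, 2 ≤ J → J % 2 = 0 → ∀ x : ℕ → ℝ,
      (aPlus J x = ∑ k ∈ (Finset.range (J + 1)).filter (fun k => 2 ≤ k ∧ k % 2 = 0),
          (-4 : ℝ) ^ (k / 2) * fJk J k x) ∧
      aMinus J x = -4 - aPlus J x) ∧
    (∀ J : ℕ, 1 ≤ J → J % 2 = 1 → ∀ x : ℕ → ℝ,
      (aPlus J x = 2 + ∑ k ∈ (Finset.range (J + 1)).filter (fun k => 1 ≤ k ∧ k % 2 = 1),
          (-1 : ℝ) ^ ((k + 1) / 2) * 2 ^ k * fJk J k x) ∧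
      aMinus J x = 4 - aPlus J x) := by
  refine ⟨fun J hJ he x => ?_, fun J hJ ho x => ?_⟩
  · have hsign : (-1 : ℝ) ^ (J + 1) = -1 := Odd.neg_one_pow ⟨J / 2, by omega⟩
    rw [aMinus_eq (by omega), aPlus_eq (by omega), hsign,
      neg_one_pow_mul_cycleMatchingSum_of_even hJ he]
    constructor <;> ring
  · have hsign : (-1 : ℝ) ^ (J + 1) = 1 := Even.neg_one_pow ⟨J / 2 + 1, by omega⟩
    rw [aMinus_eq hJ, aPlus_eq hJ, hsign, neg_one_pow_mul_cycleMatchingSum_of_odd ho]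
    constructor <;> ring
end

section
/- For every integer n ≥ 0 one has the identity ∑_{k=0}^{⌊n/2⌋} binom(n−k, k)·(−1/4)^k = (n+1)/2^n, as an equality of rational numbers. (Lemma A.3) -/
open Finset

private lemma Trec (x : ℚ) (n : ℕ) :
    ∑ k ∈ range (n + 3), (Nat.choose (n + 2 - k) k : ℚ) * x ^ k
      = ∑ k ∈ range (n + 2), (Nat.choose (n + 1 - k) k : ℚ) * x ^ k
        + x * ∑ k ∈ range (n + 1), (Nat.choose (n - k) k : ℚ) * x ^ k := by
  have key : ∀ k ∈ range (n + 2),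
      (Nat.choose (n + 2 - (k + 1)) (k + 1) : ℚ) * x ^ (k + 1)
        = (Nat.choose (n - k) (k + 1) : ℚ) * x ^ (k + 1)
          + x * ((Nat.choose (n - k) k : ℚ) * x ^ k) := by
    intro k hk
    simp only [mem_range] at hk
    rcases Nat.lt_or_ge k (n + 1) with h | h
    · have h1 : n + 2 - (k + 1) = (n - k) + 1 := by omega
      rw [h1, Nat.choose_succ_succ]
      push_cast; ring
    · have hk1 : k = n + 1 := by omega
      subst hk1
      rw [show n + 2 - (n + 1 + 1) = 0 from by omega, show n - (n + 1) = 0 from by omega,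
        Nat.choose_zero_succ, Nat.choose_zero_succ]
      push_cast; ring
  have hL : ∑ k ∈ range (n + 3), (Nat.choose (n + 2 - k) k : ℚ) * x ^ k
      = (∑ k ∈ range (n + 2), (Nat.choose (n - k) (k + 1) : ℚ) * x ^ (k + 1))
        + (∑ k ∈ range (n + 2), x * ((Nat.choose (n - k) k : ℚ) * x ^ k)) + 1 := by
    rw [Finset.sum_range_succ' _ (n + 2), Finset.sum_congr rfl key, Finset.sum_add_distrib]
    simp
  have hR1 : ∑ k ∈ range (n + 2), (Nat.choose (n + 1 - k) k : ℚ) * x ^ k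
      = (∑ k ∈ range (n + 2), (Nat.choose (n - k) (k + 1) : ℚ) * x ^ (k + 1)) + 1 := by
    rw [Finset.sum_range_succ' _ (n + 1)]
    rw [Finset.sum_range_succ (fun k => (Nat.choose (n - k) (k + 1) : ℚ) * x ^ (k + 1)) (n + 1)]
    rw [show n - (n + 1) = 0 from by omega, Nat.choose_zero_succ]
    have : ∀ k ∈ range (n + 1),
        (Nat.choose (n + 1 - (k + 1)) (k + 1) : ℚ) * x ^ (k + 1)
          = (Nat.choose (n - k) (k + 1) : ℚ) * x ^ (k + 1) := by
      intro k hk; congr 3; omega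
    rw [Finset.sum_congr rfl this]
    simp
  have hR2 : x * ∑ k ∈ range (n + 1), (Nat.choose (n - k) k : ℚ) * x ^ k
      = ∑ k ∈ range (n + 2), x * ((Nat.choose (n - k) k : ℚ) * x ^ k) := by
    rw [Finset.sum_range_succ _ (n + 1), show n - (n + 1) = 0 from by omega,
      Nat.choose_zero_succ, Finset.mul_sum]
    push_cast; ring
  rw [hL, hR1, hR2]; ring

private lemma Teq : ∀ n : ℕ,
    ∑ k ∈ range (n + 1), (Nat.choose (n - k) k : ℚ) * (-1/4 : ℚ) ^ k
      = (n + 1) / 2 ^ n := by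
  intro n
  induction n using Nat.twoStepInduction with
  | zero => norm_num
  | one => simp [Finset.sum_range_succ]
  | more n ih1 ih2 =>
    rw [show n + 2 + 1 = n + 3 from rfl, Trec (-1/4 : ℚ) n, ih1, ih2]
    push_cast
    field_simp
    ring

/-- Lemma A.3: `∑_{k=0}^{⌊n/2⌋} binom(n-k, k) · (-1/4)^k = (n+1)/2^n`. -/
theorem sum_choose_neg_quarter (n : ℕ) :
    ∑ k ∈ Finset.range (n / 2 + 1), (Nat.choose (n - k) k : ℚ) * (-1/4 : ℚ) ^ k
      = (n + 1) / 2 ^ n := by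
  rw [← Teq n]
  apply Finset.sum_subset
  · intro k hk
    simp only [mem_range] at *
    omega
  · intro k hk hk'
    simp only [mem_range] at *
    rw [Nat.choose_eq_zero_of_lt (show n - k < k by omega)]
    simp
end

section
/- Let B' be a real symmetric (n+1)×(n+1) matrix and let B be its leading principal n×n submatrix (obtained by deleting the last row and the last column of B'). Then |Null B' − Null B| + |Sign B' − Sign B| = 1. (Lemma 3.1(b), stated for symmetrized Seifert matrices) -/
open scoped Classical in
/-- The signature of a real symmetric matrix: the number of positive eigenvalues minus the
number of negative eigenvalues, counted with multiplicity. -/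
noncomputable def matSign {n : ℕ} {A : Matrix (Fin n) (Fin n) ℝ} (hA : A.IsHermitian) : ℤ :=
  ((Finset.univ.filter fun i => 0 < hA.eigenvalues i).card : ℤ)
    - ((Finset.univ.filter fun i => hA.eigenvalues i < 0).card : ℤ)

open scoped Classical in
/-- The nullity of a real symmetric matrix: the multiplicity of `0` as an eigenvalue. -/
noncomputable def matNull {n : ℕ} {A : Matrix (Fin n) (Fin n) ℝ} (hA : A.IsHermitian) : ℤ :=
  ((Finset.univ.filter fun i => hA.eigenvalues i = 0).card : ℤ)

/-!
If the quadratic form of a symmetric matrix is positive definite on a subspace `W` and negative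
semidefinite on a subspace `U`, then `W ⊓ U = ⊥`, so `dim W + dim U` is at most the ambient
dimension. Pairing the span of the positive eigenvectors of one of `B'`, `B` with the span of
the nonpositive eigenvectors of the other (vectors of size `n` being extended by zero) gives
`p ≤ p' ≤ p + 1` for the numbers `p`, `p'` of positive eigenvalues; the same argument for the
form scaled by `ε = -1` gives `q ≤ q' ≤ q + 1` for the negative ones. The nullities are the
remaining counts, so `(Null B' - Null B, Sign B' - Sign B)` is `(1 - a - b, a - b)` with
`a = p' - p` and `b = q' - q` in `{0, 1}`.
-/

open Matrix Module Finset Function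

theorem Submodule.finrank_add_finrank_le_of_pos_of_nonpos {K V : Type*} [DivisionRing K]
    [AddCommGroup V] [Module K V] [FiniteDimensional K V] {f : V → ℝ} {W U : Submodule K V}
    (hW : ∀ x ∈ W, x ≠ 0 → 0 < f x) (hU : ∀ x ∈ U, f x ≤ 0) :
    finrank K W + finrank K U ≤ finrank K V :=
  finrank_add_finrank_le_of_disjoint <| disjoint_def.mpr fun x hxW hxU =>
    by_contra fun hx0 => (hW x hxW hx0).not_ge (hU x hxU)

theorem Finset.card_pos_add_card_neg_add_card_zero {ι α : Type*} [Fintype ι] [LinearOrder α]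
    [Zero α] (f : ι → α) :
    #{i | 0 < f i} + #{i | f i < 0} + #{i | f i = 0} = Fintype.card ι := by
  simp only [card_filter, ← sum_add_distrib, Fintype.card_eq_sum_ones]
  refine sum_congr rfl fun i _ => ?_
  rcases lt_trichotomy (f i) 0 with h | h | h <;> simp [h, not_lt_of_gt, ne_of_gt, ne_of_lt]

namespace Function.ExtendByZero

variable {R ι κ : Type*} {e : κ → ι}

lemma linearMap_eq_extend [Semiring R] (y : κ → R) : linearMap R e y = extend e y 0 :=
  funext (linearMap_apply R e y)

lemma finrank_map_linearMap [Ring R] (he : Injective e) (W : Submodule R (κ → R)) :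
    finrank R (W.map (linearMap R e)) = finrank R W :=
  (Submodule.equivMapOfInjective _ (extend_injective he (0 : ι → R)) W).finrank_eq.symm

variable [CommSemiring R] [Fintype ι] [Fintype κ]

lemma extend_zero_dotProduct (he : Injective e) (x : κ → R) (v : ι → R) :
    extend e x 0 ⬝ᵥ v = x ⬝ᵥ (v ∘ e) := by
  refine (Fintype.sum_of_injective e he _ _ (fun i hi => ?_) fun k => ?_).symm
  · simp [extend_apply' _ _ _ fun h => hi h]
  · simp [he.extend_apply]

lemma extend_zero_dotProduct_mulVec_self (he : Injective e) (A : Matrix ι ι R) (x : κ → R) :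
    extend e x 0 ⬝ᵥ A *ᵥ extend e x 0 = x ⬝ᵥ A.submatrix e e *ᵥ x := by
  rw [extend_zero_dotProduct he]
  congr 1
  funext k
  rw [comp_apply, mulVec, mulVec, dotProduct_comm, extend_zero_dotProduct he, dotProduct_comm]
  rfl

end Function.ExtendByZero

open Function.ExtendByZero

namespace Matrix.IsHermitian

section Eigenspan

variable {ι : Type*} [Fintype ι] [DecidableEq ι] {A : Matrix ι ι ℝ} (hA : A.IsHermitian)

noncomputable def eigenCoords : (ι → ℝ) ≃ₗ[ℝ] (ι → ℝ) :=
  UnitaryGroup.toLinearEquiv hA.eigenvectorUnitary⁻¹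

lemma eigenCoords_apply (x : ι → ℝ) :
    hA.eigenCoords x = (star hA.eigenvectorUnitary : Matrix ι ι ℝ) *ᵥ x := rfl

lemma dotProduct_mulVec_self_eq_sum (x : ι → ℝ) :
    x ⬝ᵥ A *ᵥ x = ∑ i, hA.eigenvalues i * hA.eigenCoords x i ^ 2 := by
  set U : Matrix ι ι ℝ := (hA.eigenvectorUnitary : Matrix ι ι ℝ)
  have hU : star U = Uᵀ := conjTranspose_eq_transpose_of_trivial U
  conv_lhs => rw [hA.spectral_theorem, Unitary.conjStarAlgAut_apply]
  rw [← mulVec_mulVec, ← mulVec_mulVec, dotProduct_mulVec, ← mulVec_transpose, ← hU,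
    ← eigenCoords_apply]
  simp only [dotProduct, mulVec_diagonal, RCLike.ofReal_real_eq_id, CompTriple.comp_eq]
  exact sum_congr rfl fun i _ => by ring

/-- The span of the eigenvectors indexed by `s`, i.e. the vectors whose eigencoordinates vanish
off `s`. -/
noncomputable def eigenspan (s : Finset ι) : Submodule ℝ (ι → ℝ) :=
  LinearMap.ker (LinearMap.funLeft ℝ ℝ ((↑) : {i // i ∉ s} → ι) ∘ₗ hA.eigenCoords.toLinearMap)

lemma card_le_finrank_eigenspan (s : Finset ι) : #s ≤ finrank ℝ (hA.eigenspan s) := by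
  set f := LinearMap.funLeft ℝ ℝ ((↑) : {i // i ∉ s} → ι) ∘ₗ hA.eigenCoords.toLinearMap
  have hrank := f.finrank_range_add_finrank_ker
  have hrange : finrank ℝ f.range ≤ Fintype.card ι - #s := by
    simpa [Fintype.card_subtype_compl] using Submodule.finrank_le f.range
  rw [finrank_fintype_fun_eq_card] at hrank
  have := s.card_le_univ
  change #s ≤ finrank ℝ f.ker
  omega

variable {hA} {ε : ℝ} {s : Finset ι} {x : ι → ℝ}

lemma mem_eigenspan : x ∈ hA.eigenspan s ↔ ∀ i ∉ s, hA.eigenCoords x i = 0 := by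
  simp [eigenspan, funext_iff]

lemma dotProduct_mulVec_self_eq_sum_of_mem_eigenspan (hx : x ∈ hA.eigenspan s) :
    x ⬝ᵥ A *ᵥ x = ∑ i ∈ s, hA.eigenvalues i * hA.eigenCoords x i ^ 2 := by
  rw [hA.dotProduct_mulVec_self_eq_sum, ← sum_subset (subset_univ s)]
  intro i _ hi
  simp [mem_eigenspan.mp hx i hi]

lemma pos_of_mem_eigenspan (hs : ∀ i ∈ s, 0 < ε * hA.eigenvalues i) (hx : x ∈ hA.eigenspan s)
    (hx0 : x ≠ 0) : 0 < ε * (x ⬝ᵥ A *ᵥ x) := by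
  obtain ⟨j, hj⟩ : ∃ j, hA.eigenCoords x j ≠ 0 := by
    by_contra! h
    exact hx0 (hA.eigenCoords.map_eq_zero_iff.mp (funext h))
  have hjs : j ∈ s := by
    by_contra h
    exact hj (mem_eigenspan.mp hx j h)
  rw [dotProduct_mulVec_self_eq_sum_of_mem_eigenspan hx, mul_sum]
  refine sum_pos' (fun i hi => ?_) ⟨j, hjs, ?_⟩
  · rw [← mul_assoc]; exact mul_nonneg (hs i hi).le (sq_nonneg _)
  · rw [← mul_assoc]; exact mul_pos (hs j hjs) (pow_two_pos_of_ne_zero hj)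

lemma nonpos_of_mem_eigenspan (hs : ∀ i ∈ s, ε * hA.eigenvalues i ≤ 0)
    (hx : x ∈ hA.eigenspan s) : ε * (x ⬝ᵥ A *ᵥ x) ≤ 0 := by
  rw [dotProduct_mulVec_self_eq_sum_of_mem_eigenspan hx, mul_sum]
  refine sum_nonpos fun i hi => ?_
  rw [← mul_assoc]
  exact mul_nonpos_of_nonpos_of_nonneg (hs i hi) (sq_nonneg _)

end Eigenspan

section Submatrix

variable {ι κ : Type*} [Fintype ι] [Fintype κ] [DecidableEq κ] {A : Matrix ι ι ℝ} {e : κ → ι}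

section

variable {hB : (A.submatrix e e).IsHermitian} {ε : ℝ} {s : Finset κ} {x : ι → ℝ}

lemma pos_of_mem_map_eigenspan (he : Injective e) (hs : ∀ k ∈ s, 0 < ε * hB.eigenvalues k)
    (hx : x ∈ (hB.eigenspan s).map (linearMap ℝ e)) (hx0 : x ≠ 0) :
    0 < ε * (x ⬝ᵥ A *ᵥ x) := by
  obtain ⟨y, hy, rfl⟩ := hx
  rw [linearMap_eq_extend, extend_zero_dotProduct_mulVec_self he]
  exact pos_of_mem_eigenspan hs hy (by rintro rfl; simp at hx0)

lemma nonpos_of_mem_map_eigenspan (he : Injective e) (hs : ∀ k ∈ s, ε * hB.eigenvalues k ≤ 0)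
    (hx : x ∈ (hB.eigenspan s).map (linearMap ℝ e)) : ε * (x ⬝ᵥ A *ᵥ x) ≤ 0 := by
  obtain ⟨y, hy, rfl⟩ := hx
  rw [linearMap_eq_extend, extend_zero_dotProduct_mulVec_self he]
  exact nonpos_of_mem_eigenspan hs hy

end

variable [DecidableEq ι] (hA : A.IsHermitian) (hB : (A.submatrix e e).IsHermitian) (ε : ℝ)

theorem card_pos_eigenvalues_submatrix_le (he : Injective e) :
    #{k | 0 < ε * hB.eigenvalues k} ≤ #{i | 0 < ε * hA.eigenvalues i} := by
  have key := Submodule.finrank_add_finrank_le_of_pos_of_nonpos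
    (f := fun x => ε * (x ⬝ᵥ A *ᵥ x))
    (W := (hB.eigenspan {k | 0 < ε * hB.eigenvalues k}).map (linearMap ℝ e))
    (U := hA.eigenspan {i | ¬ 0 < ε * hA.eigenvalues i})
    (fun _ => pos_of_mem_map_eigenspan he fun k hk => (mem_filter.mp hk).2)
    (fun _ => nonpos_of_mem_eigenspan fun i hi => not_lt.mp (mem_filter.mp hi).2)
  rw [finrank_map_linearMap he, finrank_fintype_fun_eq_card] at key
  have := hB.card_le_finrank_eigenspan {k | 0 < ε * hB.eigenvalues k}
  have := hA.card_le_finrank_eigenspan {i | ¬ 0 < ε * hA.eigenvalues i}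
  have := card_filter_add_card_filter_not (s := univ) fun i => 0 < ε * hA.eigenvalues i
  rw [card_univ] at this
  omega

theorem card_pos_eigenvalues_le_submatrix_add (he : Injective e) :
    #{i | 0 < ε * hA.eigenvalues i} ≤
      #{k | 0 < ε * hB.eigenvalues k} + (Fintype.card ι - Fintype.card κ) := by
  have key := Submodule.finrank_add_finrank_le_of_pos_of_nonpos
    (f := fun x => ε * (x ⬝ᵥ A *ᵥ x))
    (W := hA.eigenspan {i | 0 < ε * hA.eigenvalues i})
    (U := (hB.eigenspan {k | ¬ 0 < ε * hB.eigenvalues k}).map (linearMap ℝ e))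
    (fun _ => pos_of_mem_eigenspan fun i hi => (mem_filter.mp hi).2)
    (fun _ => nonpos_of_mem_map_eigenspan he fun k hk => not_lt.mp (mem_filter.mp hk).2)
  rw [finrank_map_linearMap he, finrank_fintype_fun_eq_card] at key
  have := hA.card_le_finrank_eigenspan {i | 0 < ε * hA.eigenvalues i}
  have := hB.card_le_finrank_eigenspan {k | ¬ 0 < ε * hB.eigenvalues k}
  have := card_filter_add_card_filter_not (s := univ) fun k => 0 < ε * hB.eigenvalues k
  rw [card_univ] at this
  omega

end Submatrix

end Matrix.IsHermitian

/-- Lemma 3.1(b): if `B` is the leading principal `n × n` submatrix of a real symmetric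
`(n+1) × (n+1)` matrix `B'`, then `|Null B' - Null B| + |Sign B' - Sign B| = 1`. -/
theorem null_sign_principal_submatrix (n : ℕ)
    (B' : Matrix (Fin (n + 1)) (Fin (n + 1)) ℝ) (hB' : B'.IsHermitian)
    (hB : (B'.submatrix Fin.castSucc Fin.castSucc).IsHermitian) :
    (matNull hB' - matNull hB).natAbs + (matSign hB' - matSign hB).natAbs = 1 := by
  have he := Fin.castSucc_injective n
  have pos_le := hB'.card_pos_eigenvalues_submatrix_le hB 1 he
  have pos_le' := hB'.card_pos_eigenvalues_le_submatrix_add hB 1 he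
  have neg_le := hB'.card_pos_eigenvalues_submatrix_le hB (-1) he
  have neg_le' := hB'.card_pos_eigenvalues_le_submatrix_add hB (-1) he
  have hcard' := card_pos_add_card_neg_add_card_zero hB'.eigenvalues
  have hcard := card_pos_add_card_neg_add_card_zero hB.eigenvalues
  simp only [one_mul, neg_one_mul, Left.neg_pos_iff, Fintype.card_fin]
    at pos_le pos_le' neg_le neg_le' hcard hcard'
  unfold matNull matSign
  omega
end

section
/- Let B be a real symmetric n×n matrix and let B' and B'' be real symmetric (n+1)×(n+1) matrices, each having B as its leading principal n×n submatrix. If det B' and det B'' are both nonzero and have the same sign, then Sign B' = Sign B''. (Corollary 3.2, stated for symmetrized Seifert matrices) -/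
/-!
Let `q(X)` be the number of negative eigenvalues of a real symmetric matrix `X`. By Sylvester's
law of inertia it is the largest dimension of a subspace on which `x ↦ xᵀ X x` is negative
definite, and intersecting such subspaces with the hyperplane of the first `n` coordinates gives
the interlacing `q(B) ≤ q(B') ≤ q(B) + 1`, and likewise for `B''`. Since `det B'` is the product
of the eigenvalues, its sign is `(-1) ^ q(B')`; so `q(B')` and `q(B'')` have the same parity and
hence coincide. As `B'` and `B''` are nonsingular, `Sign B' = n + 1 - 2 q(B') = Sign B''`.
-/

open Module Matrix Finset

namespace Submodule

variable {K V V' : Type*} [DivisionRing K] [AddCommGroup V] [Module K V] [AddCommGroup V']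
  [Module K V'] [FiniteDimensional K V']

theorem finrank_le_finrank_comap_add {f : V →ₗ[K] V'} (hf : Function.Injective f)
    (W : Submodule K V') :
    finrank K W ≤ finrank K (W.comap f) + (finrank K V' - finrank K V) := by
  have : FiniteDimensional K V := .of_injective f hf
  have hcomap : finrank K (W.comap f) = finrank K ↥(LinearMap.range f ⊓ W) := by
    rw [← map_comap_eq, (equivMapOfInjective f hf _).finrank_eq]
  have hsup := finrank_sup_add_finrank_inf_eq (LinearMap.range f) W
  have := (LinearMap.range f ⊔ W).finrank_le
  have := LinearMap.finrank_range_of_inj hf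
  omega

end Submodule

section Inertia

variable {𝕜 M M' : Type*} [Field 𝕜] [LinearOrder 𝕜] [AddCommGroup M] [Module 𝕜 M]
  [FiniteDimensional 𝕜 M] [AddCommGroup M'] [Module 𝕜 M'] [FiniteDimensional 𝕜 M']
  (Q : QuadraticForm 𝕜 M') {f : M →ₗ[𝕜] M'}

theorem sigNeg_comp_le (hf : Function.Injective f) : sigNeg (Q.comp f) ≤ sigNeg Q := by
  obtain ⟨V, hV, hneg⟩ := exists_finrank_eq_sigNeg_and_negDef (Q.comp f)
  rw [← hV, (Submodule.equivMapOfInjective f hf V).finrank_eq]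
  refine le_sigNeg_of_negDef Q fun ⟨x, hx⟩ hx0 => ?_
  obtain ⟨v, hv, rfl⟩ := Submodule.mem_map.mp hx
  exact hneg ⟨v, hv⟩ fun h => hx0 (by simp_all)

theorem sigNeg_le_sigNeg_comp_add (hf : Function.Injective f) :
    sigNeg Q ≤ sigNeg (Q.comp f) + (finrank 𝕜 M' - finrank 𝕜 M) := by
  obtain ⟨V, hV, hneg⟩ := exists_finrank_eq_sigNeg_and_negDef Q
  have hcomap : finrank 𝕜 (V.comap f) ≤ sigNeg (Q.comp f) :=
    le_sigNeg_of_negDef _ fun ⟨x, hx⟩ hx0 =>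
      hneg ⟨f x, hx⟩ fun h => hx0 (Subtype.ext (hf (by simpa using h)))
  have := Submodule.finrank_le_finrank_comap_add hf V
  omega

end Inertia

namespace Matrix

section CommRing

variable {R : Type*} [CommRing R] {ι κ : Type*} [Fintype ι] [DecidableEq ι]

theorem toQuadraticForm'_comp_toLin' [Fintype κ] [DecidableEq κ] (A : Matrix ι ι R)
    (P : Matrix ι κ R) : A.toQuadraticForm'.comp (toLin' P) = (Pᵀ * A * P).toQuadraticForm' := by
  ext x
  simp [toQuadraticForm', toLinearMap₂'_apply', dotProduct_mulVec, vecMul_transpose,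
    ← mulVec_mulVec]

theorem one_submatrix_mul_mul_one_submatrix (A : Matrix ι ι R) (e : κ → ι) :
    (1 : Matrix ι ι R).submatrix e id * A * (1 : Matrix ι ι R).submatrix id e =
      A.submatrix e e := by
  have := one_submatrix_mul e (Equiv.refl ι) A
  have := mul_submatrix_one (Equiv.refl ι) e (A.submatrix e id)
  simp_all

variable [Fintype κ] [DecidableEq κ]

theorem toQuadraticForm'_submatrix (A : Matrix ι ι R) (e : κ → ι) :
    (A.submatrix e e).toQuadraticForm' =
      A.toQuadraticForm'.comp (toLin' ((1 : Matrix ι ι R).submatrix id e)) := by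
  rw [toQuadraticForm'_comp_toLin', transpose_submatrix, transpose_one,
    one_submatrix_mul_mul_one_submatrix]

theorem toLin'_one_submatrix_injective {e : κ → ι} (he : Function.Injective e) :
    Function.Injective (toLin' ((1 : Matrix ι ι R).submatrix id e)) := by
  refine Function.LeftInverse.injective (g := toLin' ((1 : Matrix ι ι R).submatrix e id))
    fun x => ?_
  have := one_submatrix_mul_mul_one_submatrix (1 : Matrix ι ι R) e
  simp_all [mulVec_mulVec, submatrix_one _ he]

end CommRing

section Interlacing

variable {𝕜 : Type*} [Field 𝕜] [LinearOrder 𝕜] {ι κ : Type*} [Fintype ι] [DecidableEq ι]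
  [Fintype κ] [DecidableEq κ] (A : Matrix ι ι 𝕜) {e : κ → ι}

theorem sigNeg_submatrix_le (he : Function.Injective e) :
    sigNeg (A.submatrix e e).toQuadraticForm' ≤ sigNeg A.toQuadraticForm' := by
  rw [toQuadraticForm'_submatrix]
  exact sigNeg_comp_le _ (toLin'_one_submatrix_injective he)

theorem sigNeg_le_sigNeg_submatrix_add (he : Function.Injective e) :
    sigNeg A.toQuadraticForm' ≤
      sigNeg (A.submatrix e e).toQuadraticForm' + (Fintype.card ι - Fintype.card κ) := by
  simpa [toQuadraticForm'_submatrix] using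
    sigNeg_le_sigNeg_comp_add A.toQuadraticForm' (toLin'_one_submatrix_injective he)

end Interlacing

namespace IsHermitian

variable {ι : Type*} [Fintype ι] [DecidableEq ι] {A : Matrix ι ι ℝ} (hA : A.IsHermitian)

theorem transpose_eigenvectorUnitary_mul_mul :
    (hA.eigenvectorUnitary : Matrix ι ι ℝ)ᵀ * A * hA.eigenvectorUnitary =
      diagonal hA.eigenvalues := by
  simpa [Unitary.conjStarAlgAut_star_apply, star_eq_conjTranspose] using
    hA.conjStarAlgAut_star_eigenvectorUnitary

theorem toQuadraticForm'_comp_eigenvectorUnitary :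
    A.toQuadraticForm'.comp (toLin' (hA.eigenvectorUnitary : Matrix ι ι ℝ)) =
      QuadraticMap.weightedSumSquares ℝ hA.eigenvalues := by
  ext x
  rw [toQuadraticForm'_comp_toLin', transpose_eigenvectorUnitary_mul_mul]
  simp [toQuadraticForm', toLinearMap₂'_apply', QuadraticMap.weightedSumSquares_apply, dotProduct,
    mulVec_diagonal, mul_left_comm]

theorem sigNeg_toQuadraticForm' :
    sigNeg A.toQuadraticForm' = #{i | hA.eigenvalues i < 0} := by
  have hequiv : A.toQuadraticForm'.Equivalent
      (QuadraticMap.weightedSumSquares ℝ hA.eigenvalues) := by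
    rw [← toQuadraticForm'_comp_eigenvectorUnitary hA]
    exact ⟨QuadraticMap.isometryEquivOfCompLinearEquiv _ (UnitaryGroup.toLinearEquiv _)⟩
  rw [QuadraticForm.sigNeg_of_equiv_weightedSumSquares hequiv, Set.ncard_eq_toFinset_card',
    Set.toFinset_ofPred]

theorem eigenvalues_ne_zero_of_det_ne_zero (hd : A.det ≠ 0) (i : ι) : hA.eigenvalues i ≠ 0 := by
  rw [hA.det_eq_prod_eigenvalues, prod_ne_zero_iff] at hd
  simpa using hd i (mem_univ i)

theorem neg_one_pow_mul_det_pos (hd : A.det ≠ 0) :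
    0 < (-1) ^ #{i | hA.eigenvalues i < 0} * A.det := by
  have hne := hA.eigenvalues_ne_zero_of_det_ne_zero hd
  rw [hA.det_eq_prod_eigenvalues, ← prod_filter_mul_prod_filter_not _ (hA.eigenvalues · < 0),
    ← mul_assoc, ← prod_neg]
  refine mul_pos (prod_pos fun i hi => ?_) (prod_pos fun i hi => ?_)
  · simpa using (mem_filter.mp hi).2
  · simpa using lt_of_le_of_ne (not_lt.mp (mem_filter.mp hi).2) (hne i).symm

theorem sign_det_eq_neg_one_pow (hd : A.det ≠ 0) :
    Real.sign A.det = (-1) ^ #{i | hA.eigenvalues i < 0} := by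
  have hpos := hA.neg_one_pow_mul_det_pos hd
  rcases neg_one_pow_eq_or ℝ #{i | hA.eigenvalues i < 0} with h | h <;> rw [h] at hpos ⊢
  · exact Real.sign_of_pos (by linarith)
  · exact Real.sign_of_neg (by linarith)

end IsHermitian

end Matrix

theorem matSign_eq_of_det_ne_zero {n : ℕ} {A : Matrix (Fin n) (Fin n) ℝ} (hA : A.IsHermitian)
    (hd : A.det ≠ 0) : matSign hA = n - 2 * #{i | hA.eigenvalues i < 0} := by
  have hcard := card_filter_add_card_filter_not (s := univ) (hA.eigenvalues · < 0)
  have hpos : #{i | ¬hA.eigenvalues i < 0} = #{i | 0 < hA.eigenvalues i} :=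
    congrArg card <| filter_congr fun i _ => by
      simpa [not_lt] using (hA.eigenvalues_ne_zero_of_det_ne_zero hd i).symm.le_iff_lt
  rw [hpos, card_univ, Fintype.card_fin] at hcard
  unfold matSign
  omega

theorem sign_eq_of_same_principal_submatrix_general (n : ℕ)
    (B : Matrix (Fin n) (Fin n) ℝ)
    (B' B'' : Matrix (Fin (n + 1)) (Fin (n + 1)) ℝ)
    (hB' : B'.IsHermitian) (hB'' : B''.IsHermitian)
    (h' : B'.submatrix Fin.castSucc Fin.castSucc = B)
    (h'' : B''.submatrix Fin.castSucc Fin.castSucc = B)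
    (hd' : B'.det ≠ 0) (hd'' : B''.det ≠ 0)
    (hs : Real.sign B'.det = Real.sign B''.det) :
    matSign hB' = matSign hB'' := by
  have interlace : ∀ {X : Matrix (Fin (n + 1)) (Fin (n + 1)) ℝ} (hX : X.IsHermitian),
      X.submatrix Fin.castSucc Fin.castSucc = B →
      sigNeg B.toQuadraticForm' ≤ #{i | hX.eigenvalues i < 0} ∧
        #{i | hX.eigenvalues i < 0} ≤ sigNeg B.toQuadraticForm' + 1 := by
    rintro X hX rfl
    rw [← hX.sigNeg_toQuadraticForm']
    exact ⟨X.sigNeg_submatrix_le (Fin.castSucc_injective n),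
      by simpa using X.sigNeg_le_sigNeg_submatrix_add (Fin.castSucc_injective n)⟩
  have hpar : Even #{i | hB'.eigenvalues i < 0} ↔ Even #{i | hB''.eigenvalues i < 0} := by
    rw [hB'.sign_det_eq_neg_one_pow hd', hB''.sign_det_eq_neg_one_pow hd'', neg_one_pow_eq_ite,
      neg_one_pow_eq_ite] at hs
    split_ifs at hs <;> norm_num at hs <;> tauto
  have hB'_bounds := interlace hB' h'
  have hB''_bounds := interlace hB'' h''
  rw [Nat.even_iff, Nat.even_iff] at hpar
  rw [matSign_eq_of_det_ne_zero hB' hd', matSign_eq_of_det_ne_zero hB'' hd'']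
  omega

/-- Corollary 3.2: if two real symmetric `(n+1) × (n+1)` matrices `B'` and `B''` have the
same real symmetric matrix `B` as their leading principal `n × n` submatrix and their
determinants are nonzero and of the same sign, then `Sign B' = Sign B''`. -/
theorem sign_eq_of_same_principal_submatrix (n : ℕ)
    (B : Matrix (Fin n) (Fin n) ℝ) (hB : B.IsHermitian)
    (B' B'' : Matrix (Fin (n + 1)) (Fin (n + 1)) ℝ)
    (hB' : B'.IsHermitian) (hB'' : B''.IsHermitian)
    (h' : B'.submatrix Fin.castSucc Fin.castSucc = B)
    (h'' : B''.submatrix Fin.castSucc Fin.castSucc = B)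
    (hd' : B'.det ≠ 0) (hd'' : B''.det ≠ 0)
    (hs : Real.sign B'.det = Real.sign B''.det) :
    matSign hB' = matSign hB'' :=
  sign_eq_of_same_principal_submatrix_general n B B' B'' hB' hB'' h' h'' hd' hd'' hs
end
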